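/- arXiv:2406.15715 — 7 statements merged into one kernel-verified Lean document; each statement's English description precedes it below -/
import Mathlib

section
/- Let n ≥ 3 and 1 < p < ∞, and let p′ = p/(p−1) be the conjugate exponent. There is a constant C = C(n, p) such that for every nonnegative measurable function f on ℝ^{n−1} × ℝ and every x ∈ ℝ^{n−1}, ∫_{ℝ^{n−1}} ∫_ℝ (|x − y| + |s|)^{2−n} f(y, s) ds dy ≤ C ∫_{ℝ^{n−1}} |x − y|^{2 − n + 1/p′} ( ∫_ℝ f(y, s)^p ds )^{1/p} dy. -/
open MeasureTheory

private lemma aux_scale (β : ℝ) {a : ℝ} (ha : 0 < a) :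
    (∫⁻ s : ℝ, ENNReal.ofReal ((a + |s|) ^ (-β))) =
      ENNReal.ofReal (a ^ (1 - β)) * ∫⁻ t : ℝ, ENNReal.ofReal ((1 + |t|) ^ (-β)) := by
  have hmeas : Measurable fun s : ℝ => ENNReal.ofReal ((a + |s|) ^ (-β)) := by
    fun_prop
  have h1 : (∫⁻ s : ℝ, ENNReal.ofReal ((a + |s|) ^ (-β)))
      = ENNReal.ofReal a * ∫⁻ t : ℝ, ENNReal.ofReal ((a + |a * t|) ^ (-β)) := by
    conv_lhs => rw [← Real.smul_map_volume_mul_left (ne_of_gt ha)]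
    rw [lintegral_smul_measure, lintegral_map hmeas (measurable_const_mul a)]
    rw [abs_of_pos ha, smul_eq_mul]
  rw [h1]
  have h2 : ∀ t : ℝ, (a + |a * t|) ^ (-β) = a ^ (-β) * (1 + |t|) ^ (-β) := by
    intro t
    rw [abs_mul, abs_of_pos ha, ← Real.mul_rpow ha.le (by positivity)]
    ring_nf
  simp_rw [h2, ENNReal.ofReal_mul (Real.rpow_nonneg ha.le _)]
  rw [lintegral_const_mul' _ _ ENNReal.ofReal_ne_top, ← mul_assoc,
    ← ENNReal.ofReal_mul ha.le]
  congr 2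
  rw [sub_eq_add_neg, Real.rpow_add ha, Real.rpow_one]

private lemma aux_fin {β : ℝ} (hβ : 1 < β) :
    (∫⁻ t : ℝ, ENNReal.ofReal ((1 + |t|) ^ (-β))) < ⊤ := by
  have h : Integrable (fun t : ℝ => (1 + ‖t‖) ^ (-β)) := by
    apply integrable_one_add_norm
    simpa using hβ
  simpa [Real.norm_eq_abs] using h.lintegral_lt_top
/-- Pointwise Hölder step: the integral of
`(|x − y| + |s|)^{2−n} f(y,s)` over `ℝ^{n−1} × ℝ` is dominated by
`C ∫ |x − y|^{2−n+1/p′} ‖f(y,·)‖_{L^p(ℝ)} dy`, where `p′ = p/(p−1)`. -/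
theorem stmt_1 (n : ℕ) (hn : 3 ≤ n) (p p' : ℝ) (hp : 1 < p)
    (hp' : p' = p / (p - 1)) :
    ∃ C : ℝ, 0 ≤ C ∧
      ∀ f : (EuclideanSpace ℝ (Fin (n - 1)) × ℝ) → ℝ,
        Measurable f → (∀ z, 0 ≤ f z) →
          ∀ x : EuclideanSpace ℝ (Fin (n - 1)),
            (∫⁻ y : EuclideanSpace ℝ (Fin (n - 1)), ∫⁻ s : ℝ,
                ENNReal.ofReal ((‖x - y‖ + |s|) ^ (2 - (n : ℝ)) * f (y, s)))
              ≤ ENNReal.ofReal C *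
                ∫⁻ y : EuclideanSpace ℝ (Fin (n - 1)),
                  ENNReal.ofReal (‖x - y‖ ^ (2 - (n : ℝ) + 1 / p')) *
                    (∫⁻ s : ℝ, ENNReal.ofReal (f (y, s)) ^ p) ^ (1 / p) := by
  have hpq : p.HolderConjugate p' := (Real.holderConjugate_iff_eq_conjExponent hp).2 hp'
  have hp'1 : 1 < p' := hpq.symm.lt
  have hp'0 : 0 < p' := hpq.symm.pos
  have hn2 : (1 : ℝ) ≤ (n : ℝ) - 2 := by
    have : (3 : ℝ) ≤ (n : ℝ) := by exact_mod_cast hn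
    linarith
  set β : ℝ := ((n : ℝ) - 2) * p' with hβdef
  have hβ : 1 < β := by nlinarith
  set I := ∫⁻ t : ℝ, ENNReal.ofReal ((1 + |t|) ^ (-β)) with hIdef
  have hI : I ≠ ⊤ := (aux_fin hβ).ne
  set Cen : ENNReal := I ^ (1 / p') with hCdef
  have hCen : Cen ≠ ⊤ := ENNReal.rpow_ne_top_of_nonneg (by positivity) hI
  refine ⟨Cen.toReal, ENNReal.toReal_nonneg, ?_⟩
  intro f hf hf0 x
  rw [ENNReal.ofReal_toReal hCen]
  haveI : Nonempty (Fin (n - 1)) := ⟨⟨0, by omega⟩⟩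
  haveI : NullSingletonClass (volume : Measure (EuclideanSpace ℝ (Fin (n - 1)))) := inferInstance
  have key : ∀ y : EuclideanSpace ℝ (Fin (n - 1)), x ≠ y →
      (∫⁻ s : ℝ, ENNReal.ofReal ((‖x - y‖ + |s|) ^ (2 - (n : ℝ)) * f (y, s)))
        ≤ Cen * (ENNReal.ofReal (‖x - y‖ ^ (2 - (n : ℝ) + 1 / p')) *
            (∫⁻ s : ℝ, ENNReal.ofReal (f (y, s)) ^ p) ^ (1 / p)) := by
    intro y hxy
    set a : ℝ := ‖x - y‖ with hadef
    have ha : 0 < a := by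
      rw [hadef, norm_pos_iff, sub_ne_zero]
      exact hxy
    have hbase : ∀ s : ℝ, (0 : ℝ) < a + |s| := fun s => by positivity
    have hsplit : ∀ s : ℝ, ENNReal.ofReal ((a + |s|) ^ (2 - (n : ℝ)) * f (y, s))
        = ENNReal.ofReal ((a + |s|) ^ (2 - (n : ℝ))) * ENNReal.ofReal (f (y, s)) := fun s =>
      ENNReal.ofReal_mul (Real.rpow_nonneg (hbase s).le _)
    calc (∫⁻ s : ℝ, ENNReal.ofReal ((a + |s|) ^ (2 - (n : ℝ)) * f (y, s)))
        = ∫⁻ s : ℝ, (fun s => ENNReal.ofReal ((a + |s|) ^ (2 - (n : ℝ))))  s *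
            (fun s => ENNReal.ofReal (f (y, s))) s := by simp_rw [hsplit]
      _ ≤ (∫⁻ s : ℝ, ENNReal.ofReal ((a + |s|) ^ (2 - (n : ℝ))) ^ p') ^ (1 / p') *
            (∫⁻ s : ℝ, ENNReal.ofReal (f (y, s)) ^ p) ^ (1 / p) := by
          refine ENNReal.lintegral_mul_le_Lp_mul_Lq volume hpq.symm ?_ ?_
          · fun_prop
          · exact ((hf.comp measurable_prodMk_left).ennreal_ofReal).aemeasurable
      _ = (ENNReal.ofReal (a ^ (1 - β)) * I) ^ (1 / p') *
            (∫⁻ s : ℝ, ENNReal.ofReal (f (y, s)) ^ p) ^ (1 / p) := by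
          congr 2
          have : ∀ s : ℝ, ENNReal.ofReal ((a + |s|) ^ (2 - (n : ℝ))) ^ p'
              = ENNReal.ofReal ((a + |s|) ^ (-β)) := by
            intro s
            rw [ENNReal.ofReal_rpow_of_nonneg (Real.rpow_nonneg (hbase s).le _) hp'0.le,
              ← Real.rpow_mul (hbase s).le]
            congr 1
            rw [hβdef]; ring
          simp_rw [this]
          exact aux_scale β ha
      _ = Cen * (ENNReal.ofReal (a ^ (2 - (n : ℝ) + 1 / p')) *
            (∫⁻ s : ℝ, ENNReal.ofReal (f (y, s)) ^ p) ^ (1 / p)) := by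
          rw [ENNReal.mul_rpow_of_nonneg _ _ (by positivity),
            ENNReal.ofReal_rpow_of_nonneg (Real.rpow_nonneg ha.le _) (by positivity),
            ← Real.rpow_mul ha.le]
          have he : (1 - β) * (1 / p') = 2 - (n : ℝ) + 1 / p' := by
            rw [hβdef]; field_simp; ring
          rw [he, hCdef]; ring
  have hae : ∀ᵐ y : EuclideanSpace ℝ (Fin (n - 1)), 
      (∫⁻ s : ℝ, ENNReal.ofReal ((‖x - y‖ + |s|) ^ (2 - (n : ℝ)) * f (y, s)))
        ≤ Cen * (ENNReal.ofReal (‖x - y‖ ^ (2 - (n : ℝ) + 1 / p')) *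
            (∫⁻ s : ℝ, ENNReal.ofReal (f (y, s)) ^ p) ^ (1 / p)) := by
    have hx : ({x} : Set (EuclideanSpace ℝ (Fin (n - 1)))) =ᵐ[volume] (∅ : Set _) := by
      simp [measure_singleton]
    filter_upwards [measure_eq_zero_iff_ae_notMem.mp (measure_singleton x)] with y hy
    exact key y (fun h => hy (by simp [← h]))
  calc (∫⁻ y : EuclideanSpace ℝ (Fin (n - 1)), ∫⁻ s : ℝ,
        ENNReal.ofReal ((‖x - y‖ + |s|) ^ (2 - (n : ℝ)) * f (y, s)))
      ≤ ∫⁻ y : EuclideanSpace ℝ (Fin (n - 1)),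
          Cen * (ENNReal.ofReal (‖x - y‖ ^ (2 - (n : ℝ) + 1 / p')) *
            (∫⁻ s : ℝ, ENNReal.ofReal (f (y, s)) ^ p) ^ (1 / p)) := lintegral_mono_ae hae
    _ = Cen * ∫⁻ y : EuclideanSpace ℝ (Fin (n - 1)),
          ENNReal.ofReal (‖x - y‖ ^ (2 - (n : ℝ) + 1 / p')) *
            (∫⁻ s : ℝ, ENNReal.ofReal (f (y, s)) ^ p) ^ (1 / p) :=
      lintegral_const_mul' _ _ hCen
end

section
/- Let n ≥ 3 and 1 < p < ∞, let p′ = p/(p−1) be the conjugate exponent, and assume (n−2)p′ > 2. There is a constant C = C(n, p) such that for every nonnegative measurable function f on ℝ^{n−2} × ℝ² and every x ∈ ℝ^{n−2}, ∫_{ℝ^{n−2}} ∫_{ℝ²} (|x − y| + |s|)^{2−n} f(y, s) ds dy ≤ C ∫_{ℝ^{n−2}} |x − y|^{2 − n + 2/p′} ( ∫_{ℝ²} f(y, s)^p ds )^{1/p} dy. -/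
open MeasureTheory
open scoped ENNReal NNReal

/-- Scaling identity for the radial integral on `ℝ²`. -/
lemma scaling_aux {r a : ℝ} (ha : 0 < a) :
    (∫⁻ s : EuclideanSpace ℝ (Fin 2), ENNReal.ofReal ((a + ‖s‖) ^ (-r)))
      = ENNReal.ofReal (a ^ ((2:ℝ) - r)) *
        ∫⁻ t : EuclideanSpace ℝ (Fin 2), ENNReal.ofReal ((1 + ‖t‖) ^ (-r)) := by
  set E := EuclideanSpace ℝ (Fin 2)
  set I : ℝ≥0∞ := ∫⁻ t : E, ENNReal.ofReal ((1 + ‖t‖) ^ (-r)) with hIdef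
  set g : E → ℝ≥0∞ := fun s => ENNReal.ofReal ((a + ‖s‖) ^ (-r)) with hg
  have hgmeas : Measurable g := by
    apply Measurable.ennreal_ofReal
    apply Continuous.measurable
    exact (continuous_const.add continuous_norm).rpow_const
      (fun s => Or.inl (add_pos_of_pos_of_nonneg ha (norm_nonneg s)).ne')
  have hfr : Module.finrank ℝ E = 2 := finrank_euclideanSpace_fin
  have h1 : (∫⁻ t : E, g (a • t)) = ENNReal.ofReal (a ^ (-2 : ℝ)) * ∫⁻ s, g s := by
    rw [← lintegral_map hgmeas (measurable_const_smul a),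
      MeasureTheory.Measure.map_addHaar_smul (volume : Measure E) ha.ne',
      lintegral_smul_measure]
    congr 2
    rw [hfr, abs_of_pos (by positivity)]
    rw [← Real.rpow_natCast a 2, ← Real.rpow_neg ha.le]
    norm_num
  have h2 : (∫⁻ t : E, g (a • t)) = ENNReal.ofReal (a ^ (-r)) * I := by
    have hpt : ∀ t : E, g (a • t)
        = ENNReal.ofReal (a ^ (-r)) * ENNReal.ofReal ((1 + ‖t‖) ^ (-r)) := by
      intro t
      have hb : a + ‖a • t‖ = a * (1 + ‖t‖) := by
        rw [norm_smul, Real.norm_eq_abs, abs_of_pos ha]; ring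
      simp only [hg, hb]
      rw [Real.mul_rpow ha.le (by positivity), ENNReal.ofReal_mul (by positivity)]
    simp_rw [hpt]
    rw [lintegral_const_mul' _ _ ENNReal.ofReal_ne_top]
  have key : ENNReal.ofReal (a ^ (-2 : ℝ)) * ∫⁻ s, g s
      = ENNReal.ofReal (a ^ (-r)) * I := by rw [← h1, h2]
  calc (∫⁻ s, g s)
      = ENNReal.ofReal (a ^ (2:ℝ)) * (ENNReal.ofReal (a ^ (-2:ℝ)) * ∫⁻ s, g s) := by
        rw [← mul_assoc, ← ENNReal.ofReal_mul (by positivity), ← Real.rpow_add ha]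
        norm_num
    _ = ENNReal.ofReal (a ^ (2:ℝ)) * (ENNReal.ofReal (a ^ (-r)) * I) := by rw [key]
    _ = ENNReal.ofReal (a ^ ((2:ℝ) - r)) * I := by
        rw [← mul_assoc, ← ENNReal.ofReal_mul (by positivity), ← Real.rpow_add ha]
        ring_nf

/-- Pointwise Hölder step in codimension 2: assuming
`(n−2)p′ > 2`, the integral of `(|x − y| + |s|)^{2−n} f(y,s)` over
`ℝ^{n−2} × ℝ²` is dominated by
`C ∫ |x − y|^{2−n+2/p′} ‖f(y,·)‖_{L^p(ℝ²)} dy`, where `p′ = p/(p−1)`. -/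
theorem stmt_3 (n : ℕ) (hn : 3 ≤ n) (p p' : ℝ) (hp : 1 < p)
    (hp' : p' = p / (p - 1)) (hcond : 2 < ((n : ℝ) - 2) * p') :
    ∃ C : ℝ, 0 ≤ C ∧
      ∀ f : (EuclideanSpace ℝ (Fin (n - 2)) × EuclideanSpace ℝ (Fin 2)) → ℝ,
        Measurable f → (∀ z, 0 ≤ f z) →
          ∀ x : EuclideanSpace ℝ (Fin (n - 2)),
            (∫⁻ y : EuclideanSpace ℝ (Fin (n - 2)), ∫⁻ s : EuclideanSpace ℝ (Fin 2),
                ENNReal.ofReal ((‖x - y‖ + ‖s‖) ^ (2 - (n : ℝ)) * f (y, s)))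
              ≤ ENNReal.ofReal C *
                ∫⁻ y : EuclideanSpace ℝ (Fin (n - 2)),
                  ENNReal.ofReal (‖x - y‖ ^ (2 - (n : ℝ) + 2 / p')) *
                    (∫⁻ s : EuclideanSpace ℝ (Fin 2),
                      ENNReal.ofReal (f (y, s)) ^ p) ^ (1 / p) := by
  have hpq : p.HolderConjugate p' := by
    rw [hp']; exact Real.HolderConjugate.conjExponent hp
  have hp'1 : 1 < p' := hpq.symm.lt
  have hp'pos : 0 < p' := by linarith
  set r : ℝ := ((n : ℝ) - 2) * p' with hrdef
  have hr2 : (2 : ℝ) < r := hcond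
  set E1 := EuclideanSpace ℝ (Fin (n - 2))
  set E2 := EuclideanSpace ℝ (Fin 2)
  set I : ℝ≥0∞ := ∫⁻ t : E2, ENNReal.ofReal ((1 + ‖t‖) ^ (-r)) with hIdef
  have hIlt : I < ⊤ := by
    apply finite_integral_one_add_norm
    rw [show (Module.finrank ℝ E2) = 2 from finrank_euclideanSpace_fin]
    exact_mod_cast hr2
  have hItop : I ^ (1 / p') ≠ ⊤ :=
    ENNReal.rpow_ne_top_of_nonneg (by positivity) hIlt.ne
  refine ⟨(I ^ (1 / p')).toReal, ENNReal.toReal_nonneg, ?_⟩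
  have hCof : ENNReal.ofReal (I ^ (1 / p')).toReal = I ^ (1 / p') :=
    ENNReal.ofReal_toReal hItop
  intro f hf hf0 x
  haveI : Nonempty (Fin (n - 2)) := ⟨⟨0, by omega⟩⟩
  have hae : ∀ᵐ y : E1, y ≠ x := by
    rw [MeasureTheory.ae_iff]
    have h0 : (volume : Measure E1) {x} = 0 := measure_singleton x
    simp only [ne_eq, not_not]
    exact h0
  have key : ∀ᵐ y : E1,
      (∫⁻ s : E2, ENNReal.ofReal ((‖x - y‖ + ‖s‖) ^ (2 - (n : ℝ)) * f (y, s)))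
        ≤ ENNReal.ofReal (I ^ (1 / p')).toReal *
          (ENNReal.ofReal (‖x - y‖ ^ (2 - (n : ℝ) + 2 / p')) *
            (∫⁻ s : E2, ENNReal.ofReal (f (y, s)) ^ p) ^ (1 / p)) := by
    filter_upwards [hae] with y hy
    set a := ‖x - y‖ with hadef
    have ha : 0 < a := by
      rw [hadef, norm_pos_iff]
      exact sub_ne_zero.mpr (Ne.symm hy)
    set F : E2 → ℝ≥0∞ := fun s => ENNReal.ofReal ((a + ‖s‖) ^ (2 - (n : ℝ))) with hFdef
    set G : E2 → ℝ≥0∞ := fun s => ENNReal.ofReal (f (y, s)) with hGdef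
    have hFmeas : Measurable F := by
      apply Measurable.ennreal_ofReal
      apply Continuous.measurable
      exact (continuous_const.add continuous_norm).rpow_const
        (fun s => Or.inl (add_pos_of_pos_of_nonneg ha (norm_nonneg s)).ne')
    have hGmeas : Measurable G := (hf.comp measurable_prodMk_left).ennreal_ofReal
    have hexp : ((2:ℝ) - r) * (1 / p') = 2 - (n : ℝ) + 2 / p' := by
      field_simp [hrdef]
      ring
    calc (∫⁻ s : E2, ENNReal.ofReal ((a + ‖s‖) ^ (2 - (n : ℝ)) * f (y, s)))
        = ∫⁻ s : E2, (F * G) s := by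
          congr 1; funext s
          simp only [Pi.mul_apply, hFdef, hGdef]
          exact ENNReal.ofReal_mul (by positivity)
      _ ≤ (∫⁻ s : E2, F s ^ p') ^ (1 / p') * (∫⁻ s : E2, G s ^ p) ^ (1 / p) :=
          ENNReal.lintegral_mul_le_Lp_mul_Lq volume hpq.symm
            hFmeas.aemeasurable hGmeas.aemeasurable
      _ = (ENNReal.ofReal (a ^ ((2:ℝ) - r)) * I) ^ (1 / p') *
            (∫⁻ s : E2, G s ^ p) ^ (1 / p) := by
          congr 1
          have hFs : ∀ s : E2, F s ^ p' = ENNReal.ofReal ((a + ‖s‖) ^ (-r)) := by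
            intro s
            simp only [hFdef]
            rw [ENNReal.ofReal_rpow_of_nonneg (by positivity) hp'pos.le,
              ← Real.rpow_mul (by positivity)]
            congr 1
            rw [hrdef]; ring
          simp_rw [hFs]
          rw [scaling_aux ha]
      _ = ENNReal.ofReal (I ^ (1 / p')).toReal *
            (ENNReal.ofReal (a ^ (2 - (n : ℝ) + 2 / p')) *
              (∫⁻ s : E2, G s ^ p) ^ (1 / p)) := by
          rw [ENNReal.mul_rpow_of_nonneg _ _ (by positivity),
            ENNReal.ofReal_rpow_of_nonneg (by positivity) (by positivity),
            ← Real.rpow_mul ha.le, hexp, hCof]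
          ring
  calc (∫⁻ y : E1, ∫⁻ s : E2,
        ENNReal.ofReal ((‖x - y‖ + ‖s‖) ^ (2 - (n : ℝ)) * f (y, s)))
      ≤ ∫⁻ y : E1, ENNReal.ofReal (I ^ (1 / p')).toReal *
          (ENNReal.ofReal (‖x - y‖ ^ (2 - (n : ℝ) + 2 / p')) *
            (∫⁻ s : E2, ENNReal.ofReal (f (y, s)) ^ p) ^ (1 / p)) :=
        lintegral_mono_ae key
    _ = ENNReal.ofReal (I ^ (1 / p')).toReal *
          ∫⁻ y : E1, ENNReal.ofReal (‖x - y‖ ^ (2 - (n : ℝ) + 2 / p')) *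
            (∫⁻ s : E2, ENNReal.ofReal (f (y, s)) ^ p) ^ (1 / p) :=
        lintegral_const_mul' _ _ ENNReal.ofReal_ne_top
end

section
/- Let 0 < ε₀ < 1 and let μ₀ : ℝ → ℝ be a smooth function with 0 ≤ μ₀ ≤ 1, μ₀(t) = 1 for |t| ≤ ε₀/2, and μ₀(t) = 0 for |t| ≥ ε₀. For λ ≥ 1 and τ ≥ 0 define m_λ(τ) = (i/(λ + i)) ∫₀^∞ (1 − μ₀(t)) e^{iλt} e^{−t} cos(tτ) dt. Then for every positive integer N there exists a constant C = C(N, μ₀) such that |m_λ(τ)| ≤ C λ^{−1} (1 + |λ − τ|)^{−N} for all τ ≥ 0 and all λ ≥ 1. -/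
open MeasureTheory Real FourierTransform

private lemma aux_pow_mul_exp_neg_le (k : ℕ) {x : ℝ} (hx : 0 ≤ x) :
    x ^ k * Real.exp (-x) ≤ k.factorial := by
  rw [Real.exp_neg]
  rw [mul_inv_le_iff₀ (Real.exp_pos x)]
  have h1 : x ^ k / k.factorial ≤ Real.exp x := by
    refine le_trans ?_ (Real.sum_le_exp_of_nonneg hx (k + 1))
    have : x ^ k / k.factorial ≤ ∑ i ∈ Finset.range (k + 1), x ^ i / i.factorial := by
      refine Finset.single_le_sum (f := fun i => x ^ i / (i.factorial : ℝ)) ?_ ?_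
      · intro i _; positivity
      · simp
    simpa using this
  calc x ^ k = (x ^ k / k.factorial) * k.factorial := by
        field_simp
    _ ≤ Real.exp x * k.factorial := by
        have : (0:ℝ) < k.factorial := by positivity
        gcongr
    _ = (k.factorial : ℝ) * Real.exp x := by ring

private lemma aux_cos_eq (z : ℂ) :
    Complex.cos z = (Complex.exp (z * Complex.I) + Complex.exp (-z * Complex.I)) / 2 := by
  have h1 := Complex.cos_add_sin_I z
  have h2 := Complex.cos_sub_sin_I z
  rw [← h1, ← h2]
  ring

private lemma aux_iteratedDeriv_cexp_neg (n : ℕ) :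
    iteratedDeriv n (fun t : ℝ => Complex.exp (-(t : ℂ)))
      = fun t : ℝ => (-1) ^ n * Complex.exp (-(t : ℂ)) := by
  induction n with
  | zero => funext t; simp
  | succ n ih =>
    rw [iteratedDeriv_succ, ih]
    ext t
    have h1 : HasDerivAt (fun t : ℝ => -(t : ℂ)) (-1) t := by
      have h0 := ((hasDerivAt_id t).ofReal_comp).neg
      simp only [id, Complex.ofReal_one] at h0
      exact h0
    have h : HasDerivAt (fun t : ℝ => Complex.exp (-(t : ℂ)))
        (Complex.exp (-(t : ℂ)) * (-1)) t := h1.cexp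
    have h2 : HasDerivAt (fun t : ℝ => (-1 : ℂ) ^ n * Complex.exp (-(t : ℂ)))
        ((-1 : ℂ) ^ n * (Complex.exp (-(t : ℂ)) * (-1))) t := h.const_mul _
    rw [h2.deriv]
    ring

private lemma aux_fourier_decay (F : SchwartzMap ℝ ℂ) (N : ℕ) :
    ∃ D : ℝ, 0 ≤ D ∧ ∀ ξ : ℝ, (1 + |ξ|) ^ N * ‖𝓕 (⇑F) ξ‖ ≤ D := by
  set G := SchwartzMap.fourierTransformCLM ℝ F with hG
  refine ⟨2 ^ N * (Finset.Iic ((N, 0) : ℕ × ℕ)).sup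
      (fun m => SchwartzMap.seminorm ℝ m.1 m.2) G, ?_, ?_⟩
  · positivity
  · intro ξ
    have h := SchwartzMap.one_add_le_sup_seminorm_apply (𝕜 := ℝ) (m := ((N, 0) : ℕ × ℕ))
      (k := N) (n := 0) le_rfl le_rfl G ξ
    rw [norm_iteratedFDeriv_zero] at h
    have hGξ : G ξ = 𝓕 (⇑F) ξ := by
      rw [hG, SchwartzMap.fourierTransformCLM_apply, SchwartzMap.fourier_coe]
    rw [hGξ] at h
    simpa [Real.norm_eq_abs] using h

/-- Rapid decay of the multiplier
`m_λ(τ) = (i/(λ+i)) ∫₀^∞ (1 − μ₀(t)) e^{iλt} e^{−t} cos(tτ) dt`: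
for every `N ≥ 1` there is `C` with
`|m_λ(τ)| ≤ C λ⁻¹ (1 + |λ − τ|)^{−N}` for all `τ ≥ 0`, `λ ≥ 1`. -/
theorem stmt_4 (ε₀ : ℝ) (hε₀ : 0 < ε₀) (hε₀1 : ε₀ < 1)
    (μ₀ : ℝ → ℝ) (hsmooth : ContDiff ℝ (⊤ : ℕ∞) μ₀)
    (hnonneg : ∀ t, 0 ≤ μ₀ t) (hle1 : ∀ t, μ₀ t ≤ 1)
    (hone : ∀ t : ℝ, |t| ≤ ε₀ / 2 → μ₀ t = 1)
    (hzero : ∀ t : ℝ, ε₀ ≤ |t| → μ₀ t = 0)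
    (N : ℕ) (hN : 0 < N) :
    ∃ C : ℝ, 0 ≤ C ∧
      ∀ lam τ : ℝ, 1 ≤ lam → 0 ≤ τ →
        ‖(Complex.I / ((lam : ℂ) + Complex.I)) *
            ∫ t in Set.Ioi (0 : ℝ),
              ((1 - μ₀ t : ℝ) : ℂ) * Complex.exp (Complex.I * (lam : ℂ) * (t : ℂ)) *
                (Real.exp (-t) : ℂ) * (Real.cos (t * τ) : ℂ)‖
          ≤ C * lam⁻¹ * (1 + |lam - τ|) ^ (-(N : ℝ)) := by
  classical
  -- the auxiliary functions
  set q : ℝ → ℂ := fun t => ((μ₀ t : ℝ) : ℂ) with hq_def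
  set f1 : ℝ → ℂ := fun t => 1 - q t with hf1_def
  set f2 : ℝ → ℂ := fun t => Complex.exp (-(t : ℂ)) with hf2_def
  set g : ℝ → ℂ := fun t => if t ≤ 0 then 0 else f1 t * f2 t with hg_def
  have hq_cd : ContDiff ℝ (⊤ : ℕ∞) q := Complex.ofRealCLM.contDiff.comp hsmooth
  have hf1_cd : ContDiff ℝ (⊤ : ℕ∞) f1 := contDiff_const.sub hq_cd
  have hf2_cd : ContDiff ℝ (⊤ : ℕ∞) f2 := by
    have : ContDiff ℝ (⊤ : ℕ∞) (fun t : ℝ => -(t : ℂ)) := Complex.ofRealCLM.contDiff.neg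
    exact Complex.contDiff_exp.comp this
  -- compact support of μ₀ and q
  have hμsupp : HasCompactSupport μ₀ := by
    apply HasCompactSupport.intro (isCompact_Icc (a := -ε₀) (b := ε₀))
    intro x hx
    apply hzero
    simp only [Set.mem_Icc, not_and_or, not_le] at hx
    rcases hx with h | h
    · rw [abs_of_neg (by linarith)]; linarith
    · rw [abs_of_pos (by linarith)]; linarith
  have hqsupp : HasCompactSupport q := by
    apply hμsupp.comp_left (g := fun x : ℝ => ((x : ℝ) : ℂ)) Complex.ofReal_zero
  -- g vanishes on t < ε₀/2
  have hg_zero : ∀ t : ℝ, t < ε₀ / 2 → g t = 0 := by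
    intro t ht
    by_cases h : t ≤ 0
    · simp [hg_def, h]
    · push_neg at h
      have habs : |t| ≤ ε₀ / 2 := by rw [abs_of_pos h]; linarith
      have : μ₀ t = 1 := hone t habs
      simp [hg_def, not_le.mpr h, hf1_def, hq_def, this]
  -- g equals f1*f2 on t > 0
  have hg_eq : ∀ t : ℝ, 0 < t → g t = f1 t * f2 t := by
    intro t ht
    simp [hg_def, not_le.mpr ht]
  -- smoothness of g
  have hg_cd : ContDiff ℝ (⊤ : ℕ∞) g := by
    rw [contDiff_iff_contDiffAt]
    intro x
    rcases lt_or_ge x (ε₀ / 2) with hx | hx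
    · have hev : g =ᶠ[nhds x] (fun _ => 0) := by
        filter_upwards [Iio_mem_nhds hx] with t ht
        exact hg_zero t ht
      exact contDiffAt_const.congr_of_eventuallyEq hev
    · have hx0 : 0 < x := lt_of_lt_of_le (by linarith) hx
      have hev : g =ᶠ[nhds x] (fun t => f1 t * f2 t) := by
        filter_upwards [Ioi_mem_nhds hx0] with t ht
        exact hg_eq t ht
      exact ((hf1_cd.mul hf2_cd).contDiffAt).congr_of_eventuallyEq hev
  -- bounds for iterated derivatives of q
  have hM : ∀ i : ℕ, ∃ Mi : ℝ, ∀ x : ℝ, ‖iteratedFDeriv ℝ i q x‖ ≤ Mi := by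
    intro i
    exact ((hq_cd.continuous_iteratedFDeriv (by exact (by exact_mod_cast le_top))).bounded_above_of_compact_support
      (hqsupp.iteratedFDeriv i))
  choose M hM using hM
  have hM0 : ∀ i, 0 ≤ M i := fun i => le_trans (norm_nonneg _) (hM i 0)
  -- bounds for iterated derivatives of f1
  have hf1_bound : ∀ (i : ℕ) (x : ℝ), ‖iteratedFDeriv ℝ i f1 x‖ ≤ 1 + M i := by
    intro i x
    have h1 : f1 = fun t => (1 : ℂ) + (-(q t)) := by
      funext t; simp [hf1_def, sub_eq_add_neg]
    rw [h1]
    rw [iteratedFDeriv_add_apply' (contDiff_const.of_le le_top).contDiffAt ((hq_cd.neg).of_le (by exact_mod_cast le_top)).contDiffAt]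
    refine le_trans (norm_add_le _ _) ?_
    have h2 : ‖iteratedFDeriv ℝ i (fun _ : ℝ => (1 : ℂ)) x‖ ≤ 1 := by
      cases i with
      | zero => simp [norm_iteratedFDeriv_zero]
      | succ n => rw [iteratedFDeriv_const_of_ne (Nat.succ_ne_zero n)]; simp
    have h3 : ‖iteratedFDeriv ℝ i (fun t => -(q t)) x‖ ≤ M i := by
      have : (fun t => -(q t)) = -q := rfl
      rw [this, iteratedFDeriv_neg_apply]
      simpa using hM i x
    linarith
  -- iterated derivatives of f2
  have hf2_norm : ∀ (j : ℕ) (x : ℝ), ‖iteratedFDeriv ℝ j f2 x‖ = Real.exp (-x) := by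
    intro j x
    rw [norm_iteratedFDeriv_eq_norm_iteratedDeriv]
    rw [hf2_def]
    rw [aux_iteratedDeriv_cexp_neg j]
    simp [Complex.norm_exp]
  -- the Schwartz map
  obtain ⟨F, hF_coe⟩ : ∃ F : SchwartzMap ℝ ℂ, ⇑F = g := by
    refine ⟨⟨g, hg_cd.of_le (by simp), ?_⟩, rfl⟩
    intro k n
    refine ⟨(∑ i ∈ Finset.range (n + 1), (n.choose i : ℝ) * (1 + M i)) * k.factorial, ?_⟩
    intro x
    set A : ℝ := ∑ i ∈ Finset.range (n + 1), (n.choose i : ℝ) * (1 + M i) with hA_def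
    have hA0 : 0 ≤ A := by
      apply Finset.sum_nonneg
      intro i _
      have := hM0 i
      positivity
    rcases lt_or_ge x (ε₀ / 2) with hx | hx
    · have hev : g =ᶠ[nhds x] (fun _ => 0) := by
        filter_upwards [Iio_mem_nhds hx] with t ht
        exact hg_zero t ht
      have : iteratedFDeriv ℝ n g x = iteratedFDeriv ℝ n (fun _ => (0:ℂ)) x := by
        rw [← iteratedFDerivWithin_univ, ← iteratedFDerivWithin_univ]
        apply Filter.EventuallyEq.iteratedFDerivWithin_eq
        · rwa [nhdsWithin_univ]
        · exact hev.eq_of_nhds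
      rw [this, iteratedFDeriv_zero_fun]
      simp only [Pi.zero_apply, norm_zero, mul_zero]
      positivity
    · have hx0 : 0 < x := lt_of_lt_of_le (by linarith) hx
      have hev : g =ᶠ[nhds x] (fun t => f1 t * f2 t) := by
        filter_upwards [Ioi_mem_nhds hx0] with t ht
        exact hg_eq t ht
      have heq : iteratedFDeriv ℝ n g x = iteratedFDeriv ℝ n (fun t => f1 t * f2 t) x := by
        rw [← iteratedFDerivWithin_univ, ← iteratedFDerivWithin_univ]
        apply Filter.EventuallyEq.iteratedFDerivWithin_eq
        · rwa [nhdsWithin_univ]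
        · exact hev.eq_of_nhds
      have hmul := norm_iteratedFDeriv_mul_le (𝕜 := ℝ) (n := n)
        hf1_cd hf2_cd x ((by exact_mod_cast le_top))
      have hbound : ‖iteratedFDeriv ℝ n (fun t => f1 t * f2 t) x‖ ≤ A * Real.exp (-x) := by
        refine le_trans hmul ?_
        rw [hA_def, Finset.sum_mul]
        apply Finset.sum_le_sum
        intro i hi
        rw [hf2_norm]
        have h1 := hf1_bound i x
        have h2 : (0:ℝ) ≤ (n.choose i : ℝ) := by positivity
        have h3 : (0:ℝ) < Real.exp (-x) := Real.exp_pos _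
        calc (n.choose i : ℝ) * ‖iteratedFDeriv ℝ i f1 x‖ * Real.exp (-x)
            ≤ (n.choose i : ℝ) * (1 + M i) * Real.exp (-x) := by
              apply mul_le_mul_of_nonneg_right _ h3.le
              apply mul_le_mul_of_nonneg_left h1 h2
          _ = (n.choose i : ℝ) * (1 + M i) * Real.exp (-x) := rfl
      rw [heq]
      calc ‖x‖ ^ k * ‖iteratedFDeriv ℝ n (fun t => f1 t * f2 t) x‖
          ≤ ‖x‖ ^ k * (A * Real.exp (-x)) := by
            apply mul_le_mul_of_nonneg_left hbound (by positivity)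
        _ = A * (x ^ k * Real.exp (-x)) := by
            rw [Real.norm_eq_abs, abs_of_pos hx0]; ring
        _ ≤ A * k.factorial := by
            apply mul_le_mul_of_nonneg_left (aux_pow_mul_exp_neg_le k hx0.le) hA0
  -- Fourier decay
  obtain ⟨D, hD0, hD'⟩ := aux_fourier_decay F N
  have hD : ∀ ξ : ℝ, (1 + |ξ|) ^ N * ‖𝓕 g ξ‖ ≤ D := by
    intro ξ; have := hD' ξ; rwa [hF_coe] at this
  refine ⟨D * (2 * Real.pi) ^ N, by positivity, ?_⟩
  intro lam τ hlam hτ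
  have hπ : (0:ℝ) < Real.pi := Real.pi_pos
  have h2π : (1:ℝ) ≤ 2 * Real.pi := by nlinarith [Real.pi_gt_three]
  -- Fourier transform identity for the oscillatory integrals
  have h_fourier : ∀ σ : ℝ,
      ∫ t : ℝ, g t * Complex.exp ((t * σ : ℝ) * Complex.I)
        = 𝓕 g (-σ / (2 * Real.pi)) := by
    intro σ
    rw [Real.fourier_real_eq_integral_exp_smul]
    congr 1
    funext v
    have harg : -2 * Real.pi * v * (-σ / (2 * Real.pi)) = v * σ := by
      field_simp
    rw [harg]
    rw [smul_eq_mul, mul_comm]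
  -- integrability
  have h_int : ∀ σ : ℝ, Integrable (fun t : ℝ => g t * Complex.exp ((t * σ : ℝ) * Complex.I)) := by
    intro σ
    have hgint : Integrable g := hF_coe ▸ F.integrable
    apply Integrable.mono' (hgint.norm)
    · apply Continuous.aestronglyMeasurable
      apply hg_cd.continuous.mul
      apply Complex.continuous_exp.comp
      exact (Complex.continuous_ofReal.comp (continuous_id.mul continuous_const)).mul
        continuous_const
    · filter_upwards with t
      rw [norm_mul, Complex.norm_exp_ofReal_mul_I, mul_one]
  -- rewrite the integral
  set P : ℝ → ℂ := fun t =>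
    (1/2 : ℂ) * (g t * Complex.exp ((t * (lam + τ) : ℝ) * Complex.I))
      + (1/2 : ℂ) * (g t * Complex.exp ((t * (lam - τ) : ℝ) * Complex.I)) with hP_def
  have h_key : (∫ t in Set.Ioi (0 : ℝ),
        ((1 - μ₀ t : ℝ) : ℂ) * Complex.exp (Complex.I * (lam : ℂ) * (t : ℂ)) *
          (Real.exp (-t) : ℂ) * (Real.cos (t * τ) : ℂ))
      = (1/2 : ℂ) * 𝓕 g (-(lam + τ) / (2 * Real.pi))
        + (1/2 : ℂ) * 𝓕 g (-(lam - τ) / (2 * Real.pi)) := by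
    have hPt : Set.EqOn (fun t : ℝ =>
        ((1 - μ₀ t : ℝ) : ℂ) * Complex.exp (Complex.I * (lam : ℂ) * (t : ℂ)) *
          (Real.exp (-t) : ℂ) * (Real.cos (t * τ) : ℂ)) P (Set.Ioi (0:ℝ)) := by
      intro t ht
      have ht0 : (0:ℝ) < t := ht
      have hgt : g t = f1 t * f2 t := hg_eq t ht0
      have hexp : ((Real.exp (-t) : ℝ) : ℂ) = f2 t := by
        rw [hf2_def]; push_cast [Complex.ofReal_exp]; norm_num
      have e1 : Complex.exp (Complex.I * (lam : ℂ) * (t : ℂ)) *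
          Complex.exp ((t * τ : ℝ) * Complex.I) = Complex.exp ((t * (lam + τ) : ℝ) * Complex.I) := by
        rw [← Complex.exp_add]; congr 1; push_cast; ring
      have e2 : Complex.exp (Complex.I * (lam : ℂ) * (t : ℂ)) *
          Complex.exp (-((t * τ : ℝ) : ℂ) * Complex.I)
            = Complex.exp ((t * (lam - τ) : ℝ) * Complex.I) := by
        rw [← Complex.exp_add]; congr 1; push_cast; ring
      show ((1 - μ₀ t : ℝ) : ℂ) * Complex.exp (Complex.I * (lam : ℂ) * (t : ℂ)) *
          (Real.exp (-t) : ℂ) * (Real.cos (t * τ) : ℂ) = P t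
      rw [hP_def]
      simp only []
      rw [hgt, hexp, Complex.ofReal_cos, aux_cos_eq]
      have hf1t : ((1 - μ₀ t : ℝ) : ℂ) = f1 t := by
        rw [hf1_def, hq_def]; push_cast; ring
      rw [hf1t]
      linear_combination (f1 t * f2 t / 2) * e1 + (f1 t * f2 t / 2) * e2
    rw [setIntegral_congr_fun measurableSet_Ioi hPt]
    rw [setIntegral_eq_integral_of_forall_compl_eq_zero (fun x hx => ?_)]
    · rw [hP_def]
      rw [integral_add ((h_int _).const_mul _) ((h_int _).const_mul _),
        integral_const_mul, integral_const_mul, h_fourier, h_fourier]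
    · simp only [Set.mem_Ioi, not_lt] at hx
      have hg0 : g x = 0 := by simp [hg_def, hx]
      simp [hP_def, hg0]
  -- prefactor bound
  have hlam0 : (0:ℝ) < lam := by linarith
  have hpre : ‖Complex.I / ((lam : ℂ) + Complex.I)‖ ≤ lam⁻¹ := by
    rw [norm_div, Complex.norm_I]
    have h1 : lam ≤ ‖(lam : ℂ) + Complex.I‖ := by
      have := Complex.abs_re_le_norm ((lam : ℂ) + Complex.I)
      simp only [Complex.add_re, Complex.ofReal_re, Complex.I_re, add_zero] at this
      exact le_trans (le_abs_self lam) this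
    rw [div_le_iff₀ (lt_of_lt_of_le hlam0 h1)]
    rw [inv_mul_eq_div, le_div_iff₀ hlam0]
    linarith
  -- Fourier decay bounds
  set L : ℝ := 1 + |lam - τ| with hL_def
  have hL1 : (1:ℝ) ≤ L := by simp [hL_def, abs_nonneg]
  have hL0 : (0:ℝ) < L := by linarith
  have hw : ∀ w : ℝ, |lam - τ| / (2 * Real.pi) ≤ |w| →
      ‖𝓕 g w‖ ≤ D * (2 * Real.pi) ^ N / L ^ N := by
    intro w hwge
    have h2πpos : (0:ℝ) < 2 * Real.pi := by linarith
    have hLle : L ≤ 2 * Real.pi * (1 + |w|) := by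
      have h1 : |lam - τ| ≤ 2 * Real.pi * |w| := by
        rw [div_le_iff₀ h2πpos] at hwge
        linarith [hwge]
      have : 2 * Real.pi * (1 + |w|) = 2 * Real.pi + 2 * Real.pi * |w| := by ring
      rw [this, hL_def]
      linarith
    have hpow : L ^ N ≤ (2 * Real.pi) ^ N * (1 + |w|) ^ N := by
      rw [← mul_pow]
      exact pow_le_pow_left₀ hL0.le hLle N
    have hbd : ‖𝓕 g w‖ * L ^ N ≤ D * (2 * Real.pi) ^ N := by
      calc ‖𝓕 g w‖ * L ^ N ≤ ‖𝓕 g w‖ * ((2 * Real.pi) ^ N * (1 + |w|) ^ N) := by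
            apply mul_le_mul_of_nonneg_left hpow (norm_nonneg _)
        _ = (2 * Real.pi) ^ N * ((1 + |w|) ^ N * ‖𝓕 g w‖) := by ring
        _ ≤ (2 * Real.pi) ^ N * D := by
            apply mul_le_mul_of_nonneg_left (hD w) (by positivity)
        _ = D * (2 * Real.pi) ^ N := by ring
    rw [le_div_iff₀ (by positivity)]
    exact hbd
  -- apply to the two frequencies
  have hw1 : ‖𝓕 g (-(lam + τ) / (2 * Real.pi))‖ ≤ D * (2 * Real.pi) ^ N / L ^ N := by
    apply hw
    rw [abs_div, abs_neg]
    have h2πpos : (0:ℝ) < 2 * Real.pi := by linarith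
    rw [abs_of_pos h2πpos]
    rw [div_le_div_iff_of_pos_right h2πpos]
    rcases abs_cases (lam - τ) with ⟨h, _⟩ | ⟨h, _⟩ <;>
      rcases abs_cases (lam + τ) with ⟨h', _⟩ | ⟨h', _⟩ <;> linarith
  have hw2 : ‖𝓕 g (-(lam - τ) / (2 * Real.pi))‖ ≤ D * (2 * Real.pi) ^ N / L ^ N := by
    apply hw
    rw [abs_div, abs_neg]
    have h2πpos : (0:ℝ) < 2 * Real.pi := by linarith
    rw [abs_of_pos h2πpos]
  -- final assembly
  rw [norm_mul, h_key]
  have hInt : ‖(1/2 : ℂ) * 𝓕 g (-(lam + τ) / (2 * Real.pi))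
      + (1/2 : ℂ) * 𝓕 g (-(lam - τ) / (2 * Real.pi))‖
        ≤ D * (2 * Real.pi) ^ N / L ^ N := by
    refine le_trans (norm_add_le _ _) ?_
    rw [norm_mul, norm_mul]
    have h12 : ‖(1/2 : ℂ)‖ = 1/2 := by norm_num
    rw [h12]
    linarith
  have hrpow : (1 + |lam - τ|) ^ (-(N : ℝ)) = (L ^ N)⁻¹ := by
    rw [← hL_def, ← Real.rpow_natCast L N, ← Real.rpow_neg hL0.le]
  rw [hrpow]
  calc ‖Complex.I / ((lam : ℂ) + Complex.I)‖ * ‖(1/2 : ℂ) * 𝓕 g (-(lam + τ) / (2 * Real.pi))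
      + (1/2 : ℂ) * 𝓕 g (-(lam - τ) / (2 * Real.pi))‖
      ≤ lam⁻¹ * (D * (2 * Real.pi) ^ N / L ^ N) := by
        apply mul_le_mul hpre hInt (norm_nonneg _) (by positivity)
    _ = D * (2 * Real.pi) ^ N * lam⁻¹ * (L ^ N)⁻¹ := by
        field_simp
end

section
/- Let η : ℝ → ℝ be a smooth function with η(t) = 1 for |t| < 1/2 and η(t) = 0 for |t| ≥ 1, and let 0 < c₀ ≤ 1. For λ ≥ 1 and 0 < ε ≤ 1, set T = c₀/ε and define, for τ ≥ 0, m_λ(τ) = (i/(λ + iε)) ∫₀^∞ (1 − η(t/T)) e^{iλt} e^{−εt} cos(tτ) dt. Then for every positive integer N there exists a constant C = C(N, η, c₀) such that |m_λ(τ)| ≤ C (λε)^{−1} (1 + ε^{−1}|λ − τ|)^{−N} for all τ ≥ 0, all λ ≥ 1, and all 0 < ε ≤ 1. -/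
open MeasureTheory Set Filter Topology

/-- Integrability of bounded continuous amplitude times decaying exponential on `(0,∞)`. -/
lemma amp_integrable {c : ℂ} (hc : c.re < 0) {g : ℝ → ℂ} (hgc : Continuous g)
    {M : ℝ} (hb : ∀ x, ‖g x‖ ≤ M) :
    IntegrableOn (fun t : ℝ => g t * Complex.exp (c * t)) (Ioi (0:ℝ)) := by
  have hmeas : AEStronglyMeasurable (fun t : ℝ => g t * Complex.exp (c * t))
      (volume.restrict (Ioi (0:ℝ))) := by
    exact (hgc.mul (Complex.continuous_exp.comp (by continuity))).aestronglyMeasurable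
  have hint : IntegrableOn (fun t : ℝ => M * Real.exp (-(-c.re) * t)) (Ioi (0:ℝ)) :=
    (exp_neg_integrableOn_Ioi 0 (by linarith)).const_mul M
  refine Integrable.mono' hint hmeas ?_
  filter_upwards with t
  have : ‖g t * Complex.exp (c * t)‖ = ‖g t‖ * Real.exp (c.re * t) := by
    rw [norm_mul, Complex.norm_exp]
    congr 2
    simp [Complex.mul_re]
  rw [this]
  have h1 : Real.exp (c.re * t) ≤ Real.exp (c.re * t) := le_rfl
  have h2 : (0:ℝ) ≤ Real.exp (c.re * t) := (Real.exp_pos _).le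
  calc ‖g t‖ * Real.exp (c.re * t) ≤ M * Real.exp (c.re * t) :=
        mul_le_mul_of_nonneg_right (hb t) h2
    _ = M * Real.exp (-(-c.re) * t) := by ring_nf

/-- One integration by parts on `(0, ∞)` against `e^{ct}` with `Re c < 0`. -/
lemma ibp_step {c : ℂ} (hc : c.re < 0) {g g' : ℝ → ℂ}
    (hg : ∀ x : ℝ, HasDerivAt g (g' x) x) (hg'c : Continuous g')
    {M M' : ℝ} (hbg : ∀ x, ‖g x‖ ≤ M) (hbg' : ∀ x, ‖g' x‖ ≤ M') (hg0 : g 0 = 0) :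
    ∫ t in Ioi (0:ℝ), g' t * Complex.exp (c * t)
      = -c * ∫ t in Ioi (0:ℝ), g t * Complex.exp (c * t) := by
  have hgc : Continuous g := by
    have : Differentiable ℝ g := fun x => (hg x).differentiableAt
    exact this.continuous
  have int1 := amp_integrable hc hg'c hbg'
  have int2 := amp_integrable hc hgc hbg
  have int2' : IntegrableOn (fun t : ℝ => g t * (c * Complex.exp (c * t))) (Ioi (0:ℝ)) := by
    exact (int2.const_mul c).congr (Filter.Eventually.of_forall fun t => by ring)
  -- derivative of h t = g t * exp (c t)
  have hderiv : ∀ x : ℝ, HasDerivAt (fun t : ℝ => g t * Complex.exp (c * t))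
      (g' x * Complex.exp (c * x) + g x * (c * Complex.exp (c * x))) x := by
    intro x
    have he : HasDerivAt (fun t : ℝ => Complex.exp (c * t)) (c * Complex.exp (c * x)) x := by
      have h1 : HasDerivAt (fun t : ℝ => c * (t:ℂ)) c x := by
        simpa using ((Complex.ofRealCLM.hasDerivAt (x := x)).const_mul c)
      simpa [mul_comm] using h1.cexp
    exact (hg x).mul he
  -- limit at infinity is 0
  have hlim : Tendsto (fun t : ℝ => g t * Complex.exp (c * t)) atTop (𝓝 0) := by
    rw [tendsto_zero_iff_norm_tendsto_zero]
    have hub : ∀ t : ℝ, ‖g t * Complex.exp (c * t)‖ ≤ M * Real.exp (c.re * t) := by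
      intro t
      rw [norm_mul, Complex.norm_exp]
      have : (c * t).re = c.re * t := by simp [Complex.mul_re]
      rw [this]
      exact mul_le_mul_of_nonneg_right (hbg t) (Real.exp_pos _).le
    have hlb : ∀ t : ℝ, (0:ℝ) ≤ ‖g t * Complex.exp (c * t)‖ := fun t => norm_nonneg _
    have hexp : Tendsto (fun t : ℝ => M * Real.exp (c.re * t)) atTop (𝓝 0) := by
      have : Tendsto (fun t : ℝ => Real.exp (c.re * t)) atTop (𝓝 0) :=
        Real.tendsto_exp_atBot.comp (tendsto_id.const_mul_atTop_of_neg hc)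
      simpa using this.const_mul M
    exact squeeze_zero hlb hub hexp
  have key := integral_Ioi_of_hasDerivAt_of_tendsto
    (f := fun t : ℝ => g t * Complex.exp (c * t))
    (f' := fun x => g' x * Complex.exp (c * x) + g x * (c * Complex.exp (c * x)))
    (a := 0) (m := 0)
    ((hgc.mul (Complex.continuous_exp.comp (by continuity))).continuousWithinAt)
    (fun x _ => hderiv x) (int1.add int2') hlim
  rw [integral_add int1 int2'] at key
  simp only [hg0, zero_mul, sub_zero, zero_sub] at key
  have : ∫ t in Ioi (0:ℝ), g t * (c * Complex.exp (c * t))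
      = c * ∫ t in Ioi (0:ℝ), g t * Complex.exp (c * t) := by
    rw [← integral_const_mul]
    exact setIntegral_congr_fun measurableSet_Ioi (fun t _ => by ring)
  rw [this] at key
  linear_combination key

lemma integral_exp_neg_rate {b : ℝ} (hb : b < 0) :
    ∫ t in Ioi (0:ℝ), Real.exp (b * t) = (-b)⁻¹ := by
  have hint : IntegrableOn (fun t : ℝ => Real.exp (b * t)) (Ioi (0:ℝ)) := by
    have := exp_neg_integrableOn_Ioi 0 (neg_pos.mpr hb)
    simpa using this
  have hder : ∀ x ∈ Ioi (0:ℝ), HasDerivAt (fun t : ℝ => b⁻¹ * Real.exp (b * t))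
      (Real.exp (b * x)) x := by
    intro x _
    have h := ((hasDerivAt_id x).const_mul b).exp.const_mul b⁻¹
    refine h.congr_deriv ?_
    simp only [id, mul_one]
    rw [mul_comm (Real.exp _) b, ← mul_assoc, inv_mul_cancel₀ hb.ne, one_mul]
  have hlim : Tendsto (fun t : ℝ => b⁻¹ * Real.exp (b * t)) atTop (𝓝 0) := by
    have : Tendsto (fun t : ℝ => Real.exp (b * t)) atTop (𝓝 0) :=
      Real.tendsto_exp_atBot.comp (tendsto_id.const_mul_atTop_of_neg hb)
    simpa using this.const_mul b⁻¹
  have key := integral_Ioi_of_hasDerivAt_of_tendsto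
    (f := fun t : ℝ => b⁻¹ * Real.exp (b * t)) (f' := fun t => Real.exp (b * t))
    (a := 0) (m := 0)
    (Continuous.continuousWithinAt (by continuity)) hder hint hlim
  rw [key]
  simp [inv_neg]

/-- Repeated integration by parts : oscillatory decay bound. -/
lemma osc_bound {T : ℝ} (hT : 0 < T) {ψ : ℕ → ℝ → ℂ} {M : ℕ → ℝ}
    (hcont : ∀ k, Continuous (ψ k))
    (hder : ∀ k x, HasDerivAt (ψ k) (((1:ℂ)/T) * ψ (k+1) x) x)
    (hbd : ∀ k x, ‖ψ k x‖ ≤ M k)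
    (h0 : ∀ k, 0 < k → ψ k 0 = 0) (h00 : ψ 0 0 = 1)
    {c : ℂ} (hc : c.re < 0) (N : ℕ) (hN : 0 < N) :
    ‖∫ t in Ioi (0:ℝ), (1 - ψ 0 t) * Complex.exp (c * t)‖
      ≤ M N * (-c.re)⁻¹ / (‖c‖ * T)^N := by
  have hT' : (T:ℂ) ≠ 0 := by exact_mod_cast hT.ne'
  have hcne : c ≠ 0 := fun h => by simp [h] at hc
  have hM : ∀ k, 0 ≤ M k := fun k => le_trans (norm_nonneg _) (hbd k 0)
  have hEb : ∀ t : ℝ, ‖Complex.exp (c * t)‖ = Real.exp (c.re * t) := by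
    intro t
    rw [Complex.norm_exp]
    congr 1
    simp [Complex.mul_re]
  -- step 1 : from 1 - ψ 0 to ψ 1
  have step1 : ∫ t in Ioi (0:ℝ), ψ 1 t * Complex.exp (c * t)
      = (c * T) * ∫ t in Ioi (0:ℝ), (1 - ψ 0 t) * Complex.exp (c * t) := by
    have hgder : ∀ x : ℝ, HasDerivAt (fun t => 1 - ψ 0 t) (-((1:ℂ)/T) * ψ 1 x) x := by
      intro x
      simpa [neg_mul] using (hder 0 x).const_sub 1
    have hb1 : ∀ x, ‖(1:ℂ) - ψ 0 x‖ ≤ 1 + M 0 := fun x =>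
      le_trans (norm_sub_le _ _) (by simpa using add_le_add_left (hbd 0 x) 1)
    have hb2 : ∀ x, ‖-((1:ℂ)/T) * ψ 1 x‖ ≤ (1/T) * M 1 := by
      intro x
      rw [norm_mul, norm_neg]
      have h1 : ‖(1:ℂ)/(T:ℂ)‖ = 1/T := by
        rw [norm_div, norm_one, Complex.norm_real]
        rw [Real.norm_eq_abs, abs_of_pos hT]
      rw [h1]
      exact mul_le_mul_of_nonneg_left (hbd 1 x) (by positivity)
    have key := ibp_step hc hgder ((continuous_const.mul (hcont 1))) hb1 hb2
      (by simp [h00])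
    have hLHS : ∫ t in Ioi (0:ℝ), (-((1:ℂ)/T) * ψ 1 t) * Complex.exp (c * t)
        = -((1:ℂ)/T) * ∫ t in Ioi (0:ℝ), ψ 1 t * Complex.exp (c * t) := by
      rw [← integral_const_mul]
      exact setIntegral_congr_fun measurableSet_Ioi (fun t _ => by ring)
    rw [hLHS] at key
    field_simp at key
    linear_combination -key
  -- step k≥1 : from ψ k to ψ (k+1)
  have stepk : ∀ k : ℕ, 0 < k → ∫ t in Ioi (0:ℝ), ψ (k+1) t * Complex.exp (c * t)
      = (-(c * T)) * ∫ t in Ioi (0:ℝ), ψ k t * Complex.exp (c * t) := by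
    intro k hk
    have hb2 : ∀ x, ‖((1:ℂ)/T) * ψ (k+1) x‖ ≤ (1/T) * M (k+1) := by
      intro x
      rw [norm_mul]
      have h1 : ‖(1:ℂ)/(T:ℂ)‖ = 1/T := by
        rw [norm_div, norm_one, Complex.norm_real]
        rw [Real.norm_eq_abs, abs_of_pos hT]
      rw [h1]
      exact mul_le_mul_of_nonneg_left (hbd (k+1) x) (by positivity)
    have key := ibp_step hc (hder k) (continuous_const.mul (hcont (k+1)))
      (hbd k) hb2 (h0 k hk)
    have hLHS : ∫ t in Ioi (0:ℝ), (((1:ℂ)/T) * ψ (k+1) t) * Complex.exp (c * t)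
        = ((1:ℂ)/T) * ∫ t in Ioi (0:ℝ), ψ (k+1) t * Complex.exp (c * t) := by
      rw [← integral_const_mul]
      exact setIntegral_congr_fun measurableSet_Ioi (fun t _ => by ring)
    rw [hLHS] at key
    field_simp at key
    rw [key]; ring
  -- chain
  have chain : ∀ k : ℕ, ∫ t in Ioi (0:ℝ), ψ (k+1) t * Complex.exp (c * t)
      = (-1)^k * (c * T)^(k+1) * ∫ t in Ioi (0:ℝ), (1 - ψ 0 t) * Complex.exp (c * t) := by
    intro k
    induction k with
    | zero => simpa using step1
    | succ n ih =>
      rw [stepk (n+1) n.succ_pos, ih]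
      ring
  obtain ⟨n, rfl⟩ := Nat.exists_eq_succ_of_ne_zero hN.ne'
  have hchain := chain n
  -- norm bound on the ψ N integral
  have hbound : ‖∫ t in Ioi (0:ℝ), ψ (n+1) t * Complex.exp (c * t)‖ ≤ M (n+1) * (-c.re)⁻¹ := by
    have hint : IntegrableOn (fun t : ℝ => M (n+1) * Real.exp (c.re * t)) (Ioi (0:ℝ)) := by
      have := exp_neg_integrableOn_Ioi 0 (b := -c.re) (by linarith)
      exact (this.congr_fun (fun t _ => by ring_nf) measurableSet_Ioi).const_mul _
    have hle : ∀ᵐ t ∂(volume.restrict (Ioi (0:ℝ))),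
        ‖ψ (n+1) t * Complex.exp (c * t)‖ ≤ M (n+1) * Real.exp (c.re * t) := by
      filter_upwards with t
      rw [norm_mul, hEb]
      exact mul_le_mul_of_nonneg_right (hbd (n+1) t) (Real.exp_pos _).le
    calc ‖∫ t in Ioi (0:ℝ), ψ (n+1) t * Complex.exp (c * t)‖
        ≤ ∫ t in Ioi (0:ℝ), M (n+1) * Real.exp (c.re * t) :=
          norm_integral_le_of_norm_le hint hle
      _ = M (n+1) * (-c.re)⁻¹ := by rw [integral_const_mul, integral_exp_neg_rate hc]
  rw [hchain] at hbound
  rw [norm_mul, norm_mul, norm_pow, norm_neg, norm_one, one_pow, one_mul, norm_pow,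
    norm_mul, Complex.norm_real, Real.norm_eq_abs, abs_of_pos hT] at hbound
  have hpos : (0:ℝ) < (‖c‖ * T)^(n+1) := by
    have : (0:ℝ) < ‖c‖ := norm_pos_iff.mpr hcne
    positivity
  rw [le_div_iff₀ hpos]
  calc ‖∫ t in Ioi (0:ℝ), (1 - ψ 0 t) * Complex.exp (c * t)‖ * (‖c‖ * T)^(n+1)
      = (‖c‖ * T)^(n+1) * ‖∫ t in Ioi (0:ℝ), (1 - ψ 0 t) * Complex.exp (c * t)‖ := by ring
    _ ≤ M (n+1) * (-c.re)⁻¹ := hbound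

/-- Rapid decay of the multiplier
`m_λ(τ) = (i/(λ+iε)) ∫₀^∞ (1 − η(t/T)) e^{iλt} e^{−εt} cos(tτ) dt`, `T = c₀/ε`:
for every `N ≥ 1` there is `C` with
`|m_λ(τ)| ≤ C (λε)⁻¹ (1 + ε⁻¹|λ − τ|)^{−N}` for all `τ ≥ 0`, `λ ≥ 1`, `0 < ε ≤ 1`. -/
theorem stmt_5 (η : ℝ → ℝ) (hsmooth : ContDiff ℝ (⊤ : ℕ∞) η)
    (hone : ∀ t : ℝ, |t| < 1 / 2 → η t = 1)
    (hzero : ∀ t : ℝ, 1 ≤ |t| → η t = 0)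
    (c₀ : ℝ) (hc₀ : 0 < c₀) (hc₀1 : c₀ ≤ 1)
    (N : ℕ) (hN : 0 < N) :
    ∃ C : ℝ, 0 ≤ C ∧
      ∀ lam ε τ : ℝ, 1 ≤ lam → 0 < ε → ε ≤ 1 → 0 ≤ τ →
        ‖(Complex.I / ((lam : ℂ) + Complex.I * (ε : ℂ))) *
            ∫ t in Set.Ioi (0 : ℝ),
              ((1 - η (t / (c₀ / ε)) : ℝ) : ℂ) *
                Complex.exp (Complex.I * (lam : ℂ) * (t : ℂ)) *
                (Real.exp (-(ε * t)) : ℂ) * (Real.cos (t * τ) : ℂ)‖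
          ≤ C * (lam * ε)⁻¹ * (1 + ε⁻¹ * |lam - τ|) ^ (-(N : ℝ)) := by
  classical
  -- derivatives of η
  have hck : ∀ k : ℕ, ContDiff ℝ (k+1 : ℕ) η := fun k => hsmooth.of_le (by exact_mod_cast le_top)
  have hdiff : ∀ k, Differentiable ℝ (iteratedDeriv k η) := fun k =>
    (hck k).differentiable_iteratedDeriv k (by exact_mod_cast Nat.lt_succ_self k)
  have hcont : ∀ k, Continuous (iteratedDeriv k η) := fun k => (hdiff k).continuous
  have hDsucc : ∀ (k : ℕ) (x : ℝ), HasDerivAt (iteratedDeriv k η) (iteratedDeriv (k+1) η x) x := by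
    intro k x
    have h := ((hdiff k) x).hasDerivAt
    rwa [← iteratedDeriv_succ] at h
  -- compact support and bounds
  have hsupp : HasCompactSupport η := by
    apply HasCompactSupport.intro (isCompact_Icc (a := (-1:ℝ)) (b := 1))
    intro t ht
    simp only [Set.mem_Icc, not_and_or, not_le] at ht
    apply hzero
    rcases ht with h | h
    · rw [abs_of_neg (by linarith)]; linarith
    · rw [abs_of_pos (by linarith)]; linarith
  have hsuppk : ∀ k, HasCompactSupport (iteratedDeriv k η) := by
    intro k
    induction k with
    | zero => simpa [iteratedDeriv_zero] using hsupp
    | succ n ih => rw [iteratedDeriv_succ]; exact ih.deriv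
  have hMex : ∀ k, ∃ Mk : ℝ, 0 ≤ Mk ∧ ∀ x, |iteratedDeriv k η x| ≤ Mk := by
    intro k
    obtain ⟨Ck, hCk⟩ := (hsuppk k).exists_bound_of_continuous (hcont k)
    exact ⟨max Ck 0, le_max_right _ _,
      fun x => le_trans (by simpa [Real.norm_eq_abs] using hCk x) (le_max_left _ _)⟩
  choose M hM0 hMb using hMex
  -- vanishing of derivatives at 0
  have hconst0 : ∀ n : ℕ, iteratedDeriv n (fun _ : ℝ => (0:ℝ)) = fun _ => 0 := by
    intro n
    induction n with
    | zero => simp [iteratedDeriv_zero]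
    | succ n ih =>
      rw [iteratedDeriv_succ',
        show deriv (fun _:ℝ => (0:ℝ)) = fun _ => (0:ℝ) from funext fun x => deriv_const x 0, ih]
  have hD0 : ∀ k, 0 < k → iteratedDeriv k η 0 = 0 := by
    intro k hk
    have hev : η =ᶠ[nhds (0:ℝ)] fun _ => (1:ℝ) := by
      filter_upwards [Ioo_mem_nhds (show (-(1/2):ℝ) < 0 by norm_num) (show (0:ℝ) < 1/2 by norm_num)]
        with t ht
      exact hone t (abs_lt.mpr ⟨ht.1, ht.2⟩)
    obtain ⟨m, rfl⟩ := Nat.exists_eq_succ_of_ne_zero hk.ne'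
    calc iteratedDeriv (m+1) η 0 = iteratedDeriv (m+1) (fun _ => (1:ℝ)) 0 :=
          hev.iteratedDeriv_eq (m+1)
      _ = 0 := by
          rw [iteratedDeriv_succ',
            show deriv (fun _:ℝ => (1:ℝ)) = fun _ => (0:ℝ) from funext fun x => deriv_const x 1,
            hconst0]
  refine ⟨M N * 2^N / c₀^N, div_nonneg (mul_nonneg (hM0 N) (by positivity)) (by positivity), ?_⟩
  intro lam ε τ hlam hε hε1 hτ
  have hlam0 : (0:ℝ) < lam := lt_of_lt_of_le one_pos hlam
  set T := c₀ / ε with hT_def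
  have hT : 0 < T := div_pos hc₀ hε
  set ψ : ℕ → ℝ → ℂ := fun k t => ((iteratedDeriv k η (t / T) : ℝ) : ℂ) with hψ_def
  have hψcont : ∀ k, Continuous (ψ k) := fun k =>
    Complex.continuous_ofReal.comp ((hcont k).comp (continuous_id.div_const T))
  have hψder : ∀ k x, HasDerivAt (ψ k) (((1:ℂ)/T) * ψ (k+1) x) x := by
    intro k x
    have h1 : HasDerivAt (fun x : ℝ => x / T) (1 / T) x := (hasDerivAt_id x).div_const T
    have h2 : HasDerivAt (fun x : ℝ => iteratedDeriv k η (x / T))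
        (iteratedDeriv (k+1) η (x / T) * (1 / T)) x := by
      have := (hDsucc k (x / T)).comp x h1; exact this
    have h3 := h2.ofReal_comp
    convert h3 using 1
    push_cast
    ring
  have hψbd : ∀ k x, ‖ψ k x‖ ≤ M k := fun k x => by
    simpa [hψ_def, Complex.norm_real, Real.norm_eq_abs] using hMb k (x / T)
  have hψ0 : ∀ k, 0 < k → ψ k 0 = 0 := fun k hk => by
    simp [hψ_def, zero_div, hD0 k hk]
  have hψ00 : ψ 0 0 = 1 := by
    simp [hψ_def, iteratedDeriv_zero, zero_div, hone 0 (by norm_num)]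
  set d := |lam - τ| with hd_def
  have hd0 : 0 ≤ d := abs_nonneg _
  -- the key oscillatory estimate for each frequency μ
  have hkey : ∀ μ : ℝ, d ≤ |μ| →
      ‖∫ t in Set.Ioi (0:ℝ), (1 - ψ 0 t) * Complex.exp ((Complex.I * μ - ε) * t)‖
        ≤ (M N * 2^N / c₀^N) * ε^N / (ε * (ε + d)^N) := by
    intro μ hμ
    have hre : (Complex.I * (μ:ℂ) - (ε:ℂ)).re = -ε := by simp
    have him : (Complex.I * (μ:ℂ) - (ε:ℂ)).im = μ := by simp
    have hre_neg : (Complex.I * (μ:ℂ) - (ε:ℂ)).re < 0 := by rw [hre]; linarith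
    have h1 := osc_bound hT hψcont hψder hψbd hψ0 hψ00 hre_neg N hN
    rw [hre, neg_neg] at h1
    refine h1.trans ?_
    have hεle : ε ≤ ‖Complex.I * (μ:ℂ) - (ε:ℂ)‖ := by
      have h := Complex.abs_re_le_norm (Complex.I * (μ:ℂ) - (ε:ℂ))
      rw [hre] at h
      calc ε = |(-ε : ℝ)| := by rw [abs_neg, abs_of_pos hε]
        _ ≤ _ := h
    have hdle : d ≤ ‖Complex.I * (μ:ℂ) - (ε:ℂ)‖ := by
      have h := Complex.abs_im_le_norm (Complex.I * (μ:ℂ) - (ε:ℂ))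
      rw [him] at h
      exact le_trans hμ h
    have hcpos : (0:ℝ) < ‖Complex.I * (μ:ℂ) - (ε:ℂ)‖ := lt_of_lt_of_le hε hεle
    have hlow : ((ε + d)/2 * T)^N ≤ (‖Complex.I * (μ:ℂ) - (ε:ℂ)‖ * T)^N := by
      apply pow_le_pow_left₀ (by positivity)
      apply mul_le_mul_of_nonneg_right _ hT.le
      linarith
    have hstep : M N * ε⁻¹ / (‖Complex.I * (μ:ℂ) - (ε:ℂ)‖ * T)^N
        ≤ M N * ε⁻¹ / ((ε + d)/2 * T)^N := by
      apply div_le_div_of_nonneg_left (mul_nonneg (hM0 N) (by positivity)) _ hlow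
      positivity
    refine hstep.trans_eq ?_
    rw [hT_def]
    have h2 : (ε + d) ≠ 0 := by positivity
    field_simp
    rw [div_pow, mul_pow, mul_pow]
    field_simp
  -- split the cosine integral
  have g0cont : Continuous (fun t : ℝ => (1:ℂ) - ψ 0 t) := continuous_const.sub (hψcont 0)
  have g0bd : ∀ t : ℝ, ‖(1:ℂ) - ψ 0 t‖ ≤ 1 + M 0 := fun t =>
    le_trans (norm_sub_le _ _) (by simpa using add_le_add_left (hψbd 0 t) 1)
  have hre_neg : ∀ μ : ℝ, (Complex.I * (μ:ℂ) - (ε:ℂ)).re < 0 := by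
    intro μ; simp [hε]
  have hint : ∀ μ : ℝ, IntegrableOn
      (fun t : ℝ => (1 - ψ 0 t) * Complex.exp ((Complex.I * μ - ε) * t)) (Set.Ioi 0) :=
    fun μ => amp_integrable (hre_neg μ) g0cont g0bd
  have hpt : ∀ t : ℝ, ((1 - η (t / (c₀ / ε)) : ℝ) : ℂ) *
        Complex.exp (Complex.I * (lam : ℂ) * (t : ℂ)) *
        (Real.exp (-(ε * t)) : ℂ) * (Real.cos (t * τ) : ℂ)
      = (1/2 : ℂ) * ((1 - ψ 0 t) * Complex.exp ((Complex.I * ((lam + τ : ℝ):ℂ) - ε) * t))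
        + (1/2 : ℂ) * ((1 - ψ 0 t) * Complex.exp ((Complex.I * ((lam - τ : ℝ):ℂ) - ε) * t)) := by
    intro t
    have hψ0t : ψ 0 t = ((η (t / (c₀/ε)) : ℝ) : ℂ) := by
      simp [hψ_def, iteratedDeriv_zero, hT_def]
    have e1 : Complex.exp (Complex.I * (lam:ℂ) * t) * (Real.exp (-(ε*t)) : ℂ) *
          Complex.exp (((t*τ:ℝ):ℂ) * Complex.I)
        = Complex.exp ((Complex.I * ((lam + τ : ℝ):ℂ) - ε) * t) := by
      rw [Complex.ofReal_exp, ← Complex.exp_add, ← Complex.exp_add]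
      congr 1
      push_cast
      ring
    have e2 : Complex.exp (Complex.I * (lam:ℂ) * t) * (Real.exp (-(ε*t)) : ℂ) *
          Complex.exp (-((t*τ:ℝ):ℂ) * Complex.I)
        = Complex.exp ((Complex.I * ((lam - τ : ℝ):ℂ) - ε) * t) := by
      rw [Complex.ofReal_exp, ← Complex.exp_add, ← Complex.exp_add]
      congr 1
      push_cast
      ring
    have hcos : ((Real.cos (t*τ) : ℝ):ℂ)
        = (Complex.exp (((t*τ:ℝ):ℂ) * Complex.I) + Complex.exp (-((t*τ:ℝ):ℂ) * Complex.I))/2 := by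
      rw [Complex.ofReal_cos]
      rfl
    rw [hcos, hψ0t, ← e1, ← e2]
    push_cast
    ring
  have hsplit : (∫ t in Set.Ioi (0:ℝ),
        ((1 - η (t / (c₀ / ε)) : ℝ) : ℂ) * Complex.exp (Complex.I * (lam : ℂ) * (t : ℂ)) *
          (Real.exp (-(ε * t)) : ℂ) * (Real.cos (t * τ) : ℂ))
      = (1/2 : ℂ) * (∫ t in Set.Ioi (0:ℝ),
          (1 - ψ 0 t) * Complex.exp ((Complex.I * ((lam + τ : ℝ):ℂ) - ε) * t))
        + (1/2 : ℂ) * (∫ t in Set.Ioi (0:ℝ),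
          (1 - ψ 0 t) * Complex.exp ((Complex.I * ((lam - τ : ℝ):ℂ) - ε) * t)) := by
    rw [setIntegral_congr_fun measurableSet_Ioi (fun t _ => hpt t)]
    rw [integral_add ((hint (lam+τ)).const_mul _) ((hint (lam-τ)).const_mul _),
      integral_const_mul, integral_const_mul]
  -- bounds for the two pieces
  have hb1 := hkey (lam + τ) (by
    rw [hd_def, abs_of_nonneg (by linarith : (0:ℝ) ≤ lam + τ)]
    exact le_trans (abs_sub lam τ) (by rw [abs_of_pos hlam0, abs_of_nonneg hτ]))
  have hb2 := hkey (lam - τ) le_rfl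
  -- the prefactor
  have hpref : ‖Complex.I / ((lam : ℂ) + Complex.I * (ε : ℂ))‖ ≤ 1 / lam := by
    rw [norm_div, Complex.norm_I]
    apply div_le_div_of_nonneg_left one_pos.le hlam0
    have h1 : ((lam : ℂ) + Complex.I * (ε : ℂ)).re = lam := by simp
    have := Complex.abs_re_le_norm ((lam : ℂ) + Complex.I * (ε : ℂ))
    rw [h1, abs_of_pos hlam0] at this
    exact this
  -- final computation
  have hrw : (1 + ε⁻¹ * d) ^ (-(N : ℝ)) = ε^N / (ε + d)^N := by
    have hb : (0:ℝ) < 1 + ε⁻¹ * d := by positivity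
    rw [Real.rpow_neg hb.le, Real.rpow_natCast,
      show (1 + ε⁻¹ * d) = (ε + d)/ε from by field_simp, div_pow, inv_div]
  rw [norm_mul, hsplit, hrw]
  have hnormsum : ‖(1/2 : ℂ) * (∫ t in Set.Ioi (0:ℝ),
          (1 - ψ 0 t) * Complex.exp ((Complex.I * ((lam + τ : ℝ):ℂ) - ε) * t))
        + (1/2 : ℂ) * (∫ t in Set.Ioi (0:ℝ),
          (1 - ψ 0 t) * Complex.exp ((Complex.I * ((lam - τ : ℝ):ℂ) - ε) * t))‖
      ≤ (M N * 2^N / c₀^N) * ε^N / (ε * (ε + d)^N) := by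
    refine le_trans (norm_add_le _ _) ?_
    rw [norm_mul, norm_mul]
    have h12 : ‖(1/2 : ℂ)‖ = 1/2 := by norm_num
    rw [h12]
    calc 1/2 * ‖_‖ + 1/2 * ‖_‖
        ≤ 1/2 * ((M N * 2^N / c₀^N) * ε^N / (ε * (ε + d)^N))
          + 1/2 * ((M N * 2^N / c₀^N) * ε^N / (ε * (ε + d)^N)) := by
          exact add_le_add (mul_le_mul_of_nonneg_left hb1 (by norm_num))
            (mul_le_mul_of_nonneg_left hb2 (by norm_num))
      _ = (M N * 2^N / c₀^N) * ε^N / (ε * (ε + d)^N) := by ring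
  calc ‖Complex.I / ((lam : ℂ) + Complex.I * (ε : ℂ))‖ * ‖_‖
      ≤ (1/lam) * ((M N * 2^N / c₀^N) * ε^N / (ε * (ε + d)^N)) :=
        mul_le_mul hpref hnormsum (norm_nonneg _) (by positivity)
    _ = M N * 2^N / c₀^N * (lam * ε)⁻¹ * (ε^N / (ε + d)^N) := by
        ring
end

section
/- Let c₀ > 0 and let γ : [0,1] → ℝ² be a measurable map satisfying |γ(r) − γ(r′)| ≥ c₀ |r − r′| for all r, r′ ∈ [0,1]. For λ ≥ 2 define G_λ : (0, ∞) → [0, ∞) by G_λ(d) = log(2/(λd)) for 0 < d ≤ λ^{−1}, G_λ(d) = λ^{−1/2} d^{−1/2} for λ^{−1} < d ≤ 1, and G_λ(d) = 0 for d > 1. Then for every q with 2 < q < ∞ there is a constant C = C(q, c₀) such that sup_{y ∈ ℝ²} ( ∫₀¹ G_λ(|γ(r) − y|)^q dr )^{1/q} ≤ C λ^{−1/q} for all λ ≥ 2. -/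
open MeasureTheory
open scoped ENNReal

/-- The pointwise majorant `G_λ` of the kernel of the local part of the
two-dimensional resolvent `(−Δ − (λ+i)²)^{−1}`:
`G_λ(d) = log(2/(λd))` for `0 < d ≤ λ^{−1}`, `G_λ(d) = λ^{−1/2} d^{−1/2}`
for `λ^{−1} < d ≤ 1`, and `G_λ(d) = 0` for `d > 1`. -/
noncomputable def resolventMajorant (lam d : ℝ) : ℝ :=
  if d ≤ lam⁻¹ then Real.log (2 / (lam * d))
  else if d ≤ 1 then lam ^ (-(1 / 2) : ℝ) * d ^ (-(1 / 2) : ℝ)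
  else 0

namespace Stmt6Aux

lemma maj_nonneg {lam : ℝ} (hlam : 2 ≤ lam) {d : ℝ} (hd : 0 ≤ d) :
    0 ≤ resolventMajorant lam d := by
  have hlam0 : (0 : ℝ) < lam := by linarith
  unfold resolventMajorant
  split_ifs with h1 h2
  · rcases hd.eq_or_lt with h | h
    · rw [← h, mul_zero, div_zero, Real.log_zero]
    · apply Real.log_nonneg
      have hx : 0 < lam * d := by positivity
      rw [le_div_iff₀ hx]
      have : lam * d ≤ 1 := by
        rw [← mul_inv_cancel₀ (ne_of_gt hlam0)]
        exact mul_le_mul_of_nonneg_left h1 hlam0.le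
      linarith
  · have hd0 : 0 < d := lt_of_le_of_lt (by positivity) (lt_of_not_ge h1)
    positivity
  · exact le_rfl

/-- The key pointwise implication: if `t < G_λ(d)^q` then `λ d` is bounded by
an integrable profile evaluated at `t`. -/
lemma key {lam d q t : ℝ} (hlam : 2 ≤ lam) (hd : 0 ≤ d) (hq : 2 < q) (ht : 0 < t)
    (h : t < resolventMajorant lam d ^ q) :
    lam * d < 2 * Real.exp (-(t ^ (1 / q))) +
      Set.indicator (Set.Ioo (0 : ℝ) 1) (fun u => u ^ (-(2 / q))) t := by
  have hlam0 : (0 : ℝ) < lam := by linarith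
  have hq0 : (0 : ℝ) < q := by linarith
  set s := t ^ (1 / q) with hs_def
  have hs : 0 < s := Real.rpow_pos_of_pos ht _
  have hR : 0 ≤ resolventMajorant lam d := maj_nonneg hlam hd
  have hG : s < resolventMajorant lam d := by
    have h2 := Real.rpow_lt_rpow ht.le h (by positivity : (0 : ℝ) < 1 / q)
    have h3 : (resolventMajorant lam d ^ q) ^ (1 / q) = resolventMajorant lam d := by
      rw [← Real.rpow_mul hR, mul_one_div_cancel (ne_of_gt hq0), Real.rpow_one]
    rwa [h3] at h2
  have hind : 0 ≤ Set.indicator (Set.Ioo (0 : ℝ) 1) (fun u => u ^ (-(2 / q))) t :=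
    Set.indicator_nonneg (fun u hu => Real.rpow_nonneg hu.1.le _) t
  unfold resolventMajorant at hG
  split_ifs at hG with h1 h2
  · -- log region
    have hd0 : 0 < d := by
      by_contra hne
      push_neg at hne
      have hdz : d = 0 := le_antisymm hne hd
      rw [hdz, mul_zero, div_zero, Real.log_zero] at hG
      linarith
    have hx : 0 < lam * d := by positivity
    rw [Real.lt_log_iff_exp_lt (by positivity)] at hG
    have h3 : Real.exp s * (lam * d) < 2 := (lt_div_iff₀ hx).mp hG
    have h4 : lam * d < 2 / Real.exp s := by
      rw [lt_div_iff₀ (Real.exp_pos s)]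
      nlinarith [h3]
    have h6 : 2 / Real.exp s = 2 * Real.exp (-s) := by
      rw [Real.exp_neg, div_eq_mul_inv]
    linarith
  · -- middle region
    push_neg at h1
    have hd0 : 0 < d := lt_trans (by positivity) h1
    have hx0 : 0 < lam * d := by positivity
    have hx1 : 1 < lam * d := by
      calc (1 : ℝ) = lam * lam⁻¹ := (mul_inv_cancel₀ (ne_of_gt hlam0)).symm
        _ < lam * d := mul_lt_mul_of_pos_left h1 hlam0
    have hG' : s < (lam * d) ^ (-(1 / 2) : ℝ) := by
      rwa [Real.mul_rpow hlam0.le hd]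
    have hs1 : s < 1 :=
      lt_trans hG' (Real.rpow_lt_one_of_one_lt_of_neg hx1 (by norm_num))
    have ht1 : t < 1 := by
      by_contra hge
      push_neg at hge
      have : (1 : ℝ) ≤ s := by
        calc (1 : ℝ) = 1 ^ (1 / q) := (Real.one_rpow _).symm
          _ ≤ t ^ (1 / q) := Real.rpow_le_rpow zero_le_one hge (by positivity)
      linarith
    have hxs : lam * d < s ^ (-2 : ℝ) := by
      have h7 : ((lam * d) ^ (-(1 / 2) : ℝ)) ^ (-2 : ℝ) < s ^ (-2 : ℝ) :=
        Real.rpow_lt_rpow_of_neg hs hG' (by norm_num)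
      have e1 : ((lam * d) ^ (-(1 / 2) : ℝ)) ^ (-2 : ℝ) = lam * d := by
        rw [← Real.rpow_mul hx0.le]
        norm_num
      rwa [e1] at h7
    have e2 : s ^ (-2 : ℝ) = t ^ (-(2 / q)) := by
      rw [hs_def, ← Real.rpow_mul ht.le]
      congr 1
      ring
    have hind' : Set.indicator (Set.Ioo (0 : ℝ) 1) (fun u => u ^ (-(2 / q))) t
        = s ^ (-2 : ℝ) := by
      rw [Set.indicator_of_mem (Set.mem_Ioo.mpr ⟨ht, ht1⟩)]
      exact e2.symm
    rw [hind']
    have := Real.exp_pos (-s)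
    linarith
  · -- outer region: contradiction
    linarith

lemma sublevel {c₀ : ℝ} (hc₀ : 0 < c₀) {γ : ℝ → EuclideanSpace ℝ (Fin 2)}
    (hγ : ∀ r ∈ Set.Icc (0 : ℝ) 1, ∀ r' ∈ Set.Icc (0 : ℝ) 1,
      c₀ * |r - r'| ≤ ‖γ r - γ r'‖)
    (y : EuclideanSpace ℝ (Fin 2)) (u : ℝ) :
    volume ({r | ‖γ r - y‖ < u} ∩ Set.Icc (0 : ℝ) 1)
      ≤ ENNReal.ofReal (4 * u / c₀) := by
  rcases Set.eq_empty_or_nonempty ({r | ‖γ r - y‖ < u} ∩ Set.Icc (0 : ℝ) 1) with h | ⟨a, ha⟩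
  · rw [h]; simp
  · have ha1 : ‖γ a - y‖ < u := ha.1
    have ha2 : a ∈ Set.Icc (0 : ℝ) 1 := ha.2
    have hsub : {r | ‖γ r - y‖ < u} ∩ Set.Icc (0 : ℝ) 1
        ⊆ Set.Icc (a - 2 * u / c₀) (a + 2 * u / c₀) := by
      rintro r ⟨hr1, hr2⟩
      have h3 : c₀ * |r - a| ≤ ‖γ r - γ a‖ := hγ r hr2 a ha2
      have h4 : ‖γ r - γ a‖ ≤ ‖γ r - y‖ + ‖γ a - y‖ := by
        have hid : γ r - γ a = (γ r - y) - (γ a - y) := by abel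
        rw [hid]; exact norm_sub_le _ _
      have hr1' : ‖γ r - y‖ < u := hr1
      have h5 : c₀ * |r - a| < 2 * u := by linarith
      have h6 : |r - a| < 2 * u / c₀ := by
        rw [lt_div_iff₀ hc₀]
        linarith [h5]
      have h7 := abs_lt.mp h6
      constructor <;> [linarith [h7.1]; linarith [h7.2]]
    calc volume ({r | ‖γ r - y‖ < u} ∩ Set.Icc (0 : ℝ) 1)
        ≤ volume (Set.Icc (a - 2 * u / c₀) (a + 2 * u / c₀)) := measure_mono hsub
      _ = ENNReal.ofReal (a + 2 * u / c₀ - (a - 2 * u / c₀)) := Real.volume_Icc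
      _ ≤ ENNReal.ofReal (4 * u / c₀) := by
          apply ENNReal.ofReal_le_ofReal
          apply le_of_eq
          ring

/-- The profile integrated over `(0, ∞)` is finite. -/
lemma profile_finite {q : ℝ} (hq : 2 < q) :
    (∫⁻ t in Set.Ioi (0 : ℝ), ENNReal.ofReal (2 * Real.exp (-(t ^ (1 / q)))))
      + (∫⁻ t in Set.Ioo (0 : ℝ) 1, ENNReal.ofReal (t ^ (-(2 / q)))) < ⊤ := by
  have hq0 : (0 : ℝ) < q := by linarith
  rw [ENNReal.add_lt_top]
  constructor
  · -- exponential part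
    set k : ℕ := ⌊q⌋₊ + 2 with hk
    have hkq : q < (k : ℝ) := by
      have := Nat.lt_floor_add_one q
      push_cast [hk]
      linarith
    set a : ℝ := -((k : ℝ) / q) with ha_def
    have ha : a < -1 := by
      have h1 : (1 : ℝ) < (k : ℝ) / q := (one_lt_div hq0).mpr hkq
      rw [ha_def]; linarith
    have hsplit : Set.Ioi (0 : ℝ) = Set.Ioc (0 : ℝ) 1 ∪ Set.Ioi 1 :=
      (Set.Ioc_union_Ioi_eq_Ioi (by norm_num)).symm
    rw [hsplit, lintegral_union measurableSet_Ioi Set.Ioc_disjoint_Ioi_same,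
      ENNReal.add_lt_top]
    constructor
    · -- bounded part on (0,1]
      have hb : ∀ t ∈ Set.Ioc (0 : ℝ) 1,
          ENNReal.ofReal (2 * Real.exp (-(t ^ (1 / q)))) ≤ (2 : ℝ≥0∞) := by
        intro t ht
        have h1 : Real.exp (-(t ^ (1 / q))) ≤ 1 := by
          apply Real.exp_le_one_iff.mpr
          simp only [neg_nonpos]
          exact Real.rpow_nonneg ht.1.le _
        calc ENNReal.ofReal (2 * Real.exp (-(t ^ (1 / q))))
            ≤ ENNReal.ofReal 2 := ENNReal.ofReal_le_ofReal (by nlinarith [Real.exp_pos (-(t ^ (1 / q)))])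
          _ = (2 : ℝ≥0∞) := by norm_num
      calc ∫⁻ t in Set.Ioc (0 : ℝ) 1, ENNReal.ofReal (2 * Real.exp (-(t ^ (1 / q))))
          ≤ ∫⁻ _ in Set.Ioc (0 : ℝ) 1, (2 : ℝ≥0∞) := setLIntegral_mono' measurableSet_Ioc hb
        _ = 2 * volume (Set.Ioc (0 : ℝ) 1) := setLIntegral_const _ _
        _ < ⊤ := by
            rw [Real.volume_Ioc]
            exact ENNReal.mul_lt_top (by norm_num) (by simp)
    · -- tail part on (1, ∞)
      have hint : IntegrableOn (fun t : ℝ => 2 * ((Nat.factorial k : ℕ) : ℝ) * t ^ a) (Set.Ioi (1 : ℝ)) :=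
        (integrableOn_Ioi_rpow_of_lt ha one_pos).const_mul _
      have hb : ∀ t ∈ Set.Ioi (1 : ℝ),
          ENNReal.ofReal (2 * Real.exp (-(t ^ (1 / q))))
            ≤ ENNReal.ofReal (2 * ((Nat.factorial k : ℕ) : ℝ) * t ^ a) := by
        intro t ht
        have ht1 : (1 : ℝ) < t := ht
        have ht0 : (0 : ℝ) < t := by linarith
        set s : ℝ := t ^ (1 / q) with hs_def
        have hs0 : 0 < s := Real.rpow_pos_of_pos ht0 _
        apply ENNReal.ofReal_le_ofReal
        have h1 : s ^ k / ((Nat.factorial k : ℕ) : ℝ) ≤ Real.exp s :=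
          Real.pow_div_factorial_le_exp s hs0.le k
        have hfac : (0 : ℝ) < ((Nat.factorial k : ℕ) : ℝ) := by positivity
        have h1' : s ^ k ≤ ((Nat.factorial k : ℕ) : ℝ) * Real.exp s := by
          rw [div_le_iff₀ hfac] at h1
          linarith [h1]
        have hsk : 0 < s ^ k := pow_pos hs0 k
        have h2 : Real.exp (-s) ≤ ((Nat.factorial k : ℕ) : ℝ) / s ^ k := by
          rw [Real.exp_neg, inv_eq_one_div, div_le_div_iff₀ (Real.exp_pos s) hsk]
          nlinarith [h1']
        have h3 : ((Nat.factorial k : ℕ) : ℝ) / s ^ k = ((Nat.factorial k : ℕ) : ℝ) * t ^ a := by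
          rw [div_eq_mul_inv]
          congr 1
          have e1 : s ^ k = t ^ ((1 / q) * (k : ℝ)) := by
            rw [Real.rpow_mul ht0.le, Real.rpow_natCast]
          rw [e1, ← Real.rpow_neg ht0.le]
          congr 1
          rw [ha_def]; ring
        calc 2 * Real.exp (-s) ≤ 2 * (((Nat.factorial k : ℕ) : ℝ) / s ^ k) := by linarith [h2]
          _ = 2 * ((Nat.factorial k : ℕ) : ℝ) * t ^ a := by rw [h3]; ring
      have hmeas : Measurable fun t : ℝ => ENNReal.ofReal (2 * ((Nat.factorial k : ℕ) : ℝ) * t ^ a) :=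
        ((measurable_id'.pow_const a).const_mul _).ennreal_ofReal
      calc ∫⁻ t in Set.Ioi (1 : ℝ), ENNReal.ofReal (2 * Real.exp (-(t ^ (1 / q))))
          ≤ ∫⁻ t in Set.Ioi (1 : ℝ), ENNReal.ofReal (2 * ((Nat.factorial k : ℕ) : ℝ) * t ^ a) :=
            setLIntegral_mono hmeas hb
        _ < ⊤ := hint.lintegral_lt_top
  · -- singular part
    have hexp : (-1 : ℝ) < -(2 / q) := by
      have : 2 / q < 1 := (div_lt_one hq0).mpr hq
      linarith
    have h := intervalIntegral.intervalIntegrable_rpow' (a := 0) (b := 1) hexp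
    have hint : IntegrableOn (fun t : ℝ => t ^ (-(2 / q))) (Set.Ioo (0 : ℝ) 1) :=
      (intervalIntegrable_iff_integrableOn_Ioo_of_le (by norm_num)).mp h
    exact hint.lintegral_lt_top

end Stmt6Aux

/-- For a lower-Lipschitz curve `γ : [0,1] → ℝ²` and any
`2 < q < ∞`, `sup_y (∫₀¹ G_λ(|γ(r) − y|)^q dr)^{1/q} ≤ C λ^{−1/q}` for `λ ≥ 2`. -/
theorem stmt_6 (c₀ : ℝ) (hc₀ : 0 < c₀)
    (γ : ℝ → EuclideanSpace ℝ (Fin 2)) (hγm : Measurable γ)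
    (hγ : ∀ r ∈ Set.Icc (0 : ℝ) 1, ∀ r' ∈ Set.Icc (0 : ℝ) 1,
      c₀ * |r - r'| ≤ ‖γ r - γ r'‖)
    (q : ℝ) (hq : 2 < q) :
    ∃ C : ℝ, 0 ≤ C ∧
      ∀ lam : ℝ, 2 ≤ lam → ∀ y : EuclideanSpace ℝ (Fin 2),
        (∫⁻ r in Set.Icc (0 : ℝ) 1,
            ENNReal.ofReal (resolventMajorant lam ‖γ r - y‖ ^ q)) ^ (1 / q)
          ≤ ENNReal.ofReal (C * lam ^ (-(1 / q))) := by
  classical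
  have hq0 : (0 : ℝ) < q := by linarith
  set J1 : ℝ≥0∞ := ∫⁻ t in Set.Ioi (0 : ℝ),
    ENNReal.ofReal (2 * Real.exp (-(t ^ (1 / q)))) with hJ1
  set J2 : ℝ≥0∞ := ∫⁻ t in Set.Ioo (0 : ℝ) 1,
    ENNReal.ofReal (t ^ (-(2 / q))) with hJ2
  have hJfin : J1 + J2 < ⊤ := Stmt6Aux.profile_finite hq
  set K : ℝ := (J1 + J2).toReal with hK_def
  have hK : 0 ≤ K := ENNReal.toReal_nonneg
  refine ⟨(4 * K / c₀) ^ (1 / q), Real.rpow_nonneg (by positivity) _, ?_⟩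
  intro lam hlam y
  have hlam0 : (0 : ℝ) < lam := by linarith
  -- the profile function
  set g : ℝ → ℝ := fun t => 2 * Real.exp (-(t ^ (1 / q))) +
    Set.indicator (Set.Ioo (0 : ℝ) 1) (fun u => u ^ (-(2 / q))) t with hg
  have hg_nonneg : ∀ t : ℝ, 0 ≤ g t := by
    intro t
    have h1 : 0 ≤ Set.indicator (Set.Ioo (0 : ℝ) 1) (fun u => u ^ (-(2 / q))) t :=
      Set.indicator_nonneg (fun u hu => Real.rpow_nonneg hu.1.le _) t
    have h2 := Real.exp_pos (-(t ^ (1 / q)))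
    rw [hg]; dsimp only; linarith
  -- measurability
  have hdmeas : Measurable fun r => ‖γ r - y‖ := (hγm.sub measurable_const).norm
  have hRmeas : Measurable (resolventMajorant lam) := by
    unfold resolventMajorant
    refine Measurable.ite (measurableSet_le measurable_id measurable_const) ?_ ?_
    · exact (measurable_const.div (measurable_const.mul measurable_id)).log
    · refine Measurable.ite (measurableSet_le measurable_id measurable_const) ?_
        measurable_const
      exact (measurable_id'.pow_const _).const_mul _
  have hfmeas : Measurable fun r => resolventMajorant lam ‖γ r - y‖ ^ q :=
    (hRmeas.comp hdmeas).pow_const q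
  have f_nn : 0 ≤ᵐ[volume.restrict (Set.Icc (0 : ℝ) 1)]
      fun r => resolventMajorant lam ‖γ r - y‖ ^ q :=
    Filter.Eventually.of_forall fun r =>
      Real.rpow_nonneg (Stmt6Aux.maj_nonneg hlam (norm_nonneg _)) q
  -- layer cake
  rw [lintegral_eq_lintegral_meas_lt _ f_nn hfmeas.aemeasurable]
  -- bound the distribution function
  have step1 : ∀ t ∈ Set.Ioi (0 : ℝ),
      (volume.restrict (Set.Icc (0 : ℝ) 1))
        {r | t < resolventMajorant lam ‖γ r - y‖ ^ q}
      ≤ ENNReal.ofReal (4 / (c₀ * lam)) * ENNReal.ofReal (g t) := by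
    intro t ht
    have ht0 : (0 : ℝ) < t := ht
    rw [Measure.restrict_apply (measurableSet_lt measurable_const hfmeas)]
    have hss : {r | t < resolventMajorant lam ‖γ r - y‖ ^ q} ∩ Set.Icc (0 : ℝ) 1
        ⊆ {r | ‖γ r - y‖ < g t / lam} ∩ Set.Icc (0 : ℝ) 1 := by
      rintro r ⟨hr1, hr2⟩
      refine ⟨?_, hr2⟩
      have hkey := Stmt6Aux.key hlam (norm_nonneg (γ r - y)) hq ht0 hr1
      have : lam * ‖γ r - y‖ < g t := by rw [hg]; exact hkey
      exact (lt_div_iff₀' hlam0).mpr this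
    calc volume ({r | t < resolventMajorant lam ‖γ r - y‖ ^ q} ∩ Set.Icc (0 : ℝ) 1)
        ≤ volume ({r | ‖γ r - y‖ < g t / lam} ∩ Set.Icc (0 : ℝ) 1) := measure_mono hss
      _ ≤ ENNReal.ofReal (4 * (g t / lam) / c₀) := Stmt6Aux.sublevel hc₀ hγ y _
      _ = ENNReal.ofReal (4 / (c₀ * lam)) * ENNReal.ofReal (g t) := by
          rw [← ENNReal.ofReal_mul (by positivity)]
          congr 1
          simp only [div_eq_mul_inv, mul_inv]
          ring
  -- measurability of the profile bound
  have hgmeas : Measurable fun t : ℝ =>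
      ENNReal.ofReal (4 / (c₀ * lam)) * ENNReal.ofReal (g t) := by
    apply Measurable.const_mul
    apply Measurable.ennreal_ofReal
    rw [hg]
    apply Measurable.add
    · exact ((measurable_id'.pow_const (1 / q)).neg.exp.const_mul 2)
    · exact (measurable_id'.pow_const (-(2 / q))).indicator measurableSet_Ioo
  -- integrate the bound
  have hsplit : ∫⁻ t in Set.Ioi (0 : ℝ), ENNReal.ofReal (g t) = J1 + J2 := by
    have hgr : ∀ t : ℝ, ENNReal.ofReal (g t)
        = ENNReal.ofReal (2 * Real.exp (-(t ^ (1 / q))))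
          + Set.indicator (Set.Ioo (0 : ℝ) 1)
              (fun u => ENNReal.ofReal (u ^ (-(2 / q)))) t := by
      intro t
      rw [hg]
      dsimp only
      rw [ENNReal.ofReal_add (by positivity)
        (Set.indicator_nonneg (fun u hu => Real.rpow_nonneg hu.1.le _) t)]
      congr 1
      by_cases h : t ∈ Set.Ioo (0 : ℝ) 1 <;> simp [h]
    simp_rw [hgr]
    rw [lintegral_add_left (f := fun t : ℝ => ENNReal.ofReal (2 * Real.exp (-(t ^ (1 / q))))) (((measurable_id'.pow_const (1 / q)).neg.exp.const_mul
      2).ennreal_ofReal)]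
    congr 1
    rw [lintegral_indicator measurableSet_Ioo, Measure.restrict_restrict measurableSet_Ioo,
      Set.inter_eq_self_of_subset_left Set.Ioo_subset_Ioi_self]
  have hbound : (∫⁻ t in Set.Ioi (0 : ℝ),
      (volume.restrict (Set.Icc (0 : ℝ) 1))
        {r | t < resolventMajorant lam ‖γ r - y‖ ^ q})
      ≤ ENNReal.ofReal ((4 * K / c₀) * lam⁻¹) := by
    calc (∫⁻ t in Set.Ioi (0 : ℝ), (volume.restrict (Set.Icc (0 : ℝ) 1))
          {r | t < resolventMajorant lam ‖γ r - y‖ ^ q})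
        ≤ ∫⁻ t in Set.Ioi (0 : ℝ),
            ENNReal.ofReal (4 / (c₀ * lam)) * ENNReal.ofReal (g t) :=
          setLIntegral_mono hgmeas step1
      _ = ENNReal.ofReal (4 / (c₀ * lam)) * ∫⁻ t in Set.Ioi (0 : ℝ),
            ENNReal.ofReal (g t) :=
          lintegral_const_mul' _ _ ENNReal.ofReal_ne_top
      _ = ENNReal.ofReal (4 / (c₀ * lam)) * ENNReal.ofReal K := by
          rw [hsplit, hK_def, ENNReal.ofReal_toReal hJfin.ne]
      _ = ENNReal.ofReal (4 / (c₀ * lam) * K) := by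
          rw [← ENNReal.ofReal_mul (by positivity)]
      _ ≤ ENNReal.ofReal ((4 * K / c₀) * lam⁻¹) := by
          apply ENNReal.ofReal_le_ofReal
          apply le_of_eq
          simp only [div_eq_mul_inv, mul_inv]
          ring
  calc (∫⁻ t in Set.Ioi (0 : ℝ), (volume.restrict (Set.Icc (0 : ℝ) 1))
        {r | t < resolventMajorant lam ‖γ r - y‖ ^ q}) ^ (1 / q)
      ≤ (ENNReal.ofReal ((4 * K / c₀) * lam⁻¹)) ^ (1 / q) :=
        ENNReal.rpow_le_rpow hbound (by positivity)
    _ = ENNReal.ofReal (((4 * K / c₀) * lam⁻¹) ^ (1 / q)) :=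
        ENNReal.ofReal_rpow_of_nonneg (by positivity) (by positivity)
    _ = ENNReal.ofReal ((4 * K / c₀) ^ (1 / q) * lam ^ (-(1 / q))) := by
        congr 1
        rw [Real.mul_rpow (by positivity) (by positivity),
          Real.inv_rpow hlam0.le, ← Real.rpow_neg hlam0.le]
end

section
/- Let c₀ > 0 and let γ : [0,1] → ℝ² be a measurable map satisfying |γ(r) − γ(r′)| ≥ c₀ |r − r′| for all r, r′ ∈ [0,1]. For λ ≥ 2 define G_λ : (0, ∞) → [0, ∞) by G_λ(d) = log(2/(λd)) for 0 < d ≤ λ^{−1}, G_λ(d) = λ^{−1/2} d^{−1/2} for λ^{−1} < d ≤ 1, and G_λ(d) = 0 for d > 1. Then there is a constant C = C(c₀) such that sup_{y ∈ ℝ²} ( ∫₀¹ G_λ(|γ(r) − y|)² dr )^{1/2} ≤ C λ^{−1/2} (log λ)^{1/2} for all λ ≥ 2. -/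
open MeasureTheory
open scoped ENNReal

private lemma sublevel_measure (c₀ : ℝ) (hc₀ : 0 < c₀)
    (γ : ℝ → EuclideanSpace ℝ (Fin 2))
    (hγ : ∀ r ∈ Set.Icc (0 : ℝ) 1, ∀ r' ∈ Set.Icc (0 : ℝ) 1,
      c₀ * |r - r'| ≤ ‖γ r - γ r'‖) (y : EuclideanSpace ℝ (Fin 2)) (ρ : ℝ) :
    volume ({r | ‖γ r - y‖ < ρ} ∩ Set.Icc (0:ℝ) 1) ≤ ENNReal.ofReal (4 * ρ / c₀) := by
  rcases Set.eq_empty_or_nonempty ({r | ‖γ r - y‖ < ρ} ∩ Set.Icc (0:ℝ) 1) with h | ⟨r₀, hr₀⟩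
  · simp [h]
  · have hsub : ({r | ‖γ r - y‖ < ρ} ∩ Set.Icc (0:ℝ) 1) ⊆
        Set.Icc (r₀ - 2 * ρ / c₀) (r₀ + 2 * ρ / c₀) := by
      rintro r ⟨hr, hrI⟩
      have h1 : c₀ * |r - r₀| ≤ ‖γ r - γ r₀‖ := hγ r hrI r₀ hr₀.2
      have h2 : ‖γ r - γ r₀‖ ≤ ‖γ r - y‖ + ‖γ r₀ - y‖ := by
        calc ‖γ r - γ r₀‖ ≤ ‖γ r - y‖ + ‖y - γ r₀‖ := norm_sub_le_norm_sub_add_norm_sub _ _ _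
          _ = ‖γ r - y‖ + ‖γ r₀ - y‖ := by rw [norm_sub_rev y]
      have h3 : c₀ * |r - r₀| ≤ 2 * ρ := by
        have hx : ‖γ r - y‖ < ρ := hr
        have hx0 : ‖γ r₀ - y‖ < ρ := hr₀.1
        linarith
      have h4 : |r - r₀| ≤ 2 * ρ / c₀ := by
        rw [le_div_iff₀ hc₀]; linarith [h3]
      constructor <;> [skip; skip] <;> cases' abs_le.mp h4 with hl hr' <;> linarith
    calc volume _ ≤ volume (Set.Icc (r₀ - 2 * ρ / c₀) (r₀ + 2 * ρ / c₀)) := measure_mono hsub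
      _ = ENNReal.ofReal (4 * ρ / c₀) := by
          rw [Real.volume_Icc]; ring_nf

private lemma majorant_measurable (lam : ℝ) : Measurable (resolventMajorant lam) := by
  unfold resolventMajorant
  refine Measurable.ite (measurableSet_le measurable_id measurable_const) ?_
    (Measurable.ite (measurableSet_le measurable_id measurable_const) ?_ measurable_const)
  · exact (measurable_const.div (measurable_const.mul measurable_id)).log
  · exact measurable_const.mul (measurable_id.pow_const _)

private lemma superlevel_d (lam : ℝ) (hlam : 2 ≤ lam) {t d : ℝ} (ht : 0 < t) (hd : 0 ≤ d)
    (h : t < (resolventMajorant lam d)^2) :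
    d < 2 * Real.exp (-Real.sqrt t) / lam ∨ (t < 1 ∧ d < (lam * t)⁻¹) := by
  have hlam0 : (0:ℝ) < lam := by linarith
  unfold resolventMajorant at h
  split_ifs at h with h1 h2
  · left
    rcases eq_or_lt_of_le hd with hd0 | hd0
    · exfalso
      rw [← hd0] at h
      norm_num [Real.log_zero] at h
      linarith
    · have hld : 0 < lam * d := mul_pos hlam0 hd0
      have hld1 : lam * d ≤ 1 := by
        calc lam * d ≤ lam * lam⁻¹ := by
              exact mul_le_mul_of_nonneg_left h1 hlam0.le
          _ = 1 := mul_inv_cancel₀ hlam0.ne'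
      have hu : (1:ℝ) < 2 / (lam * d) := by
        rw [lt_div_iff₀ hld]; linarith
      have hlogpos : 0 < Real.log (2 / (lam * d)) := Real.log_pos hu
      have hst : Real.sqrt t < Real.log (2 / (lam * d)) := by
        have h5 := Real.sqrt_lt_sqrt ht.le h
        rwa [Real.sqrt_sq_eq_abs, abs_of_pos hlogpos] at h5
      have h4 : Real.exp (Real.sqrt t) < 2 / (lam * d) :=
        (Real.lt_log_iff_exp_lt (by linarith)).mp hst
      have h5 : Real.exp (Real.sqrt t) * (lam * d) < 2 := (lt_div_iff₀ hld).mp h4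
      have key : 2 * Real.exp (-Real.sqrt t) / lam = 2 / (lam * Real.exp (Real.sqrt t)) := by
        rw [Real.exp_neg]; field_simp
      rw [key, lt_div_iff₀ (by positivity)]
      nlinarith [h5, Real.exp_pos (Real.sqrt t)]
  · right
    have hd0 : 0 < d := lt_trans (inv_pos.mpr hlam0) (not_le.mp h1)
    have hsq : (lam ^ (-(1/2):ℝ) * d ^ (-(1/2):ℝ))^2 = (lam * d)⁻¹ := by
      rw [mul_pow, ← Real.rpow_natCast (lam ^ (-(1/2):ℝ)) 2,
        ← Real.rpow_natCast (d ^ (-(1/2):ℝ)) 2,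
        ← Real.rpow_mul hlam0.le, ← Real.rpow_mul hd0.le]
      norm_num
      rw [Real.rpow_neg_one, Real.rpow_neg_one] <;> ring
    rw [hsq] at h
    have h1' : 1 < lam * d := by
      have hx : lam⁻¹ < d := not_le.mp h1
      calc (1:ℝ) = lam * lam⁻¹ := (mul_inv_cancel₀ hlam0.ne').symm
        _ < lam * d := by exact mul_lt_mul_of_pos_left hx hlam0
    have h6 : t * (lam * d) < 1 := by
      have h7 := mul_lt_mul_of_pos_right h (by positivity : (0:ℝ) < lam * d)
      rwa [inv_mul_cancel₀ (by positivity : (lam*d:ℝ) ≠ 0)] at h7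
    constructor
    · nlinarith
    · have h8 : d * (lam * t) < 1 := by nlinarith
      calc d = d * (lam*t) * (lam*t)⁻¹ := by field_simp
        _ < 1 * (lam*t)⁻¹ := by
            exact mul_lt_mul_of_pos_right h8 (by positivity)
        _ = (lam*t)⁻¹ := one_mul _
  · exfalso; norm_num at h; linarith

private lemma superlevel_measure (c₀ : ℝ) (hc₀ : 0 < c₀)
    (γ : ℝ → EuclideanSpace ℝ (Fin 2))
    (hγ : ∀ r ∈ Set.Icc (0 : ℝ) 1, ∀ r' ∈ Set.Icc (0 : ℝ) 1,
      c₀ * |r - r'| ≤ ‖γ r - γ r'‖) (y : EuclideanSpace ℝ (Fin 2))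
    (lam : ℝ) (hlam : 2 ≤ lam) {t : ℝ} (ht : 0 < t) :
    volume ({r | t < (resolventMajorant lam ‖γ r - y‖)^2} ∩ Set.Icc (0:ℝ) 1)
      ≤ ENNReal.ofReal (2 * (4/(c₀*lam)) * Real.exp (-Real.sqrt t))
        + (Set.Ioo (0:ℝ) 1).indicator
            (fun s => ENNReal.ofReal (2 * (4/(c₀*lam)) / (4/(c₀*lam) + s))) t := by
  have hlam0 : (0:ℝ) < lam := by linarith
  set A : ℝ := 4/(c₀*lam) with hA
  have hA0 : 0 < A := by positivity
  set S₁ : Set ℝ := {r | ‖γ r - y‖ < 2 * Real.exp (-Real.sqrt t) / lam} ∩ Set.Icc (0:ℝ) 1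
  set S₂ : Set ℝ := {r | ‖γ r - y‖ < (lam * t)⁻¹} ∩ Set.Icc (0:ℝ) 1
  have hS1 : volume S₁ ≤ ENNReal.ofReal (2 * A * Real.exp (-Real.sqrt t)) := by
    refine (sublevel_measure c₀ hc₀ γ hγ y _).trans (le_of_eq ?_)
    congr 1
    rw [hA]; field_simp
  by_cases ht1 : t < 1
  · have hsub : {r | t < (resolventMajorant lam ‖γ r - y‖)^2} ∩ Set.Icc (0:ℝ) 1 ⊆ S₁ ∪ S₂ := by
      rintro r ⟨hr, hrI⟩
      rcases superlevel_d lam hlam ht (norm_nonneg _) hr with h | ⟨_, h⟩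
      · exact Or.inl ⟨h, hrI⟩
      · exact Or.inr ⟨h, hrI⟩
    have hS2 : volume S₂ ≤ ENNReal.ofReal (2 * A / (A + t)) := by
      rcases le_or_gt t A with hta | hta
      · have h1 : volume S₂ ≤ 1 := by
          calc volume S₂ ≤ volume (Set.Icc (0:ℝ) 1) := measure_mono Set.inter_subset_right
            _ = 1 := by rw [Real.volume_Icc]; norm_num
        refine h1.trans ?_
        rw [show (1:ℝ≥0∞) = ENNReal.ofReal 1 by simp]
        apply ENNReal.ofReal_le_ofReal
        rw [le_div_iff₀ (by positivity)]; linarith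
      · refine (sublevel_measure c₀ hc₀ γ hγ y _).trans ?_
        apply ENNReal.ofReal_le_ofReal
        have he : 4 * (lam * t)⁻¹ / c₀ = A / t := by rw [hA]; field_simp
        rw [he, div_le_div_iff₀ (by positivity) (by positivity)]
        nlinarith
    calc volume _ ≤ volume (S₁ ∪ S₂) := measure_mono hsub
      _ ≤ volume S₁ + volume S₂ := measure_union_le _ _
      _ ≤ _ := add_le_add hS1 (hS2.trans (le_of_eq
          (Set.indicator_of_mem (Set.mem_Ioo.mpr ⟨ht, ht1⟩) (fun s => ENNReal.ofReal (2 * A / (A + s)))).symm))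
  · have hsub : {r | t < (resolventMajorant lam ‖γ r - y‖)^2} ∩ Set.Icc (0:ℝ) 1 ⊆ S₁ := by
      rintro r ⟨hr, hrI⟩
      rcases superlevel_d lam hlam ht (norm_nonneg _) hr with h | ⟨h, _⟩
      · exact ⟨h, hrI⟩
      · exact absurd h ht1
    calc volume _ ≤ volume S₁ := measure_mono hsub
      _ ≤ _ := le_trans hS1 le_self_add

private lemma exp_integral_bound (A : ℝ) (hA : 0 ≤ A) :
    ∫⁻ t in Set.Ioi (0:ℝ), ENNReal.ofReal (2 * A * Real.exp (-Real.sqrt t))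
      ≤ ENNReal.ofReal (26 * A) := by
  have hsplit : Set.Ioi (0:ℝ) = Set.Ioc (0:ℝ) 1 ∪ Set.Ioi (1:ℝ) :=
    (Set.Ioc_union_Ioi_eq_Ioi (by norm_num)).symm
  rw [hsplit, lintegral_union measurableSet_Ioi Set.Ioc_disjoint_Ioi_same]
  have h1 : ∫⁻ t in Set.Ioc (0:ℝ) 1, ENNReal.ofReal (2 * A * Real.exp (-Real.sqrt t))
      ≤ ENNReal.ofReal (2 * A) := by
    calc ∫⁻ t in Set.Ioc (0:ℝ) 1, ENNReal.ofReal (2 * A * Real.exp (-Real.sqrt t))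
        ≤ ∫⁻ _ in Set.Ioc (0:ℝ) 1, ENNReal.ofReal (2 * A) := by
          refine lintegral_mono fun t => ENNReal.ofReal_le_ofReal ?_
          have he : Real.exp (-Real.sqrt t) ≤ 1 := by
            rw [Real.exp_le_one_iff]
            simp [Real.sqrt_nonneg]
          nlinarith [Real.exp_pos (-Real.sqrt t)]
      _ = ENNReal.ofReal (2 * A) * volume (Set.Ioc (0:ℝ) 1) := by
          rw [setLIntegral_const]
      _ ≤ ENNReal.ofReal (2 * A) := by
          rw [Real.volume_Ioc]; norm_num
  have h2 : ∫⁻ t in Set.Ioi (1:ℝ), ENNReal.ofReal (2 * A * Real.exp (-Real.sqrt t))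
      ≤ ENNReal.ofReal (24 * A) := by
    have hpt : ∀ t ∈ Set.Ioi (1:ℝ),
        ENNReal.ofReal (2 * A * Real.exp (-Real.sqrt t))
          ≤ ENNReal.ofReal (12 * A * t ^ (-(3/2) : ℝ)) := by
      intro t ht
      have ht0 : (0:ℝ) < t := lt_trans one_pos ht
      apply ENNReal.ofReal_le_ofReal
      have hs : Real.sqrt t ^ 3 / (6:ℝ) ≤ Real.exp (Real.sqrt t) := by
        have := Real.pow_div_factorial_le_exp (Real.sqrt t) (Real.sqrt_nonneg t) 3
        norm_num at this
        exact this
      have hsq : Real.sqrt t ^ 3 = t ^ ((3:ℝ)/2) := by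
        rw [show Real.sqrt t = t ^ ((1:ℝ)/2) from Real.sqrt_eq_rpow t,
          ← Real.rpow_natCast (t ^ ((1:ℝ)/2)) 3, ← Real.rpow_mul ht0.le]
        norm_num
      have hup : 0 < t ^ ((3:ℝ)/2) := Real.rpow_pos_of_pos ht0 _
      have hmain : Real.exp (-Real.sqrt t) ≤ 6 * t ^ (-(3/2) : ℝ) := by
        rw [Real.exp_neg, Real.rpow_neg ht0.le]
        rw [hsq] at hs
        have h9 := inv_anti₀ (by positivity : (0:ℝ) < t ^ ((3:ℝ)/2) / 6) hs
        rw [inv_div, div_eq_mul_inv] at h9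
        linarith
      nlinarith [hmain, hup]
    have hmeas : Measurable fun t : ℝ => ENNReal.ofReal (12 * A * t ^ (-(3/2) : ℝ)) :=
      ((measurable_id.pow_const _).const_mul _).ennreal_ofReal
    calc ∫⁻ t in Set.Ioi (1:ℝ), ENNReal.ofReal (2 * A * Real.exp (-Real.sqrt t))
        ≤ ∫⁻ t in Set.Ioi (1:ℝ), ENNReal.ofReal (12 * A * t ^ (-(3/2) : ℝ)) :=
          setLIntegral_mono hmeas hpt
      _ = ENNReal.ofReal (∫ t in Set.Ioi (1:ℝ), 12 * A * t ^ (-(3/2) : ℝ)) := by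
          rw [ofReal_integral_eq_lintegral_ofReal]
          · exact (integrableOn_Ioi_rpow_of_lt (by norm_num) one_pos).const_mul _
          · filter_upwards [ae_restrict_mem measurableSet_Ioi] with t ht
            have ht0 : (0:ℝ) ≤ t := by
              have : (1:ℝ) < t := ht
              linarith
            have h10 := Real.rpow_nonneg ht0 (-(3/2) : ℝ)
            exact mul_nonneg (by linarith) h10
      _ = ENNReal.ofReal (24 * A) := by
          rw [MeasureTheory.integral_const_mul,
            integral_Ioi_rpow_of_lt (by norm_num) one_pos]
          norm_num
          rw [ENNReal.ofReal_mul' (by norm_num)]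
          norm_num
          ring
  calc _ ≤ ENNReal.ofReal (2 * A) + ENNReal.ofReal (24 * A) := add_le_add h1 h2
    _ = ENNReal.ofReal (26 * A) := by
        rw [← ENNReal.ofReal_add (by linarith) (by linarith)]
        congr 1; ring

private lemma log_integral_bound (A : ℝ) (hA : 0 < A) :
    ∫⁻ t in Set.Ioi (0:ℝ),
        (Set.Ioo (0:ℝ) 1).indicator (fun s => ENNReal.ofReal (2 * A / (A + s))) t
      ≤ ENNReal.ofReal (2 * A * Real.log ((A + 1) / A)) := by
  rw [lintegral_indicator measurableSet_Ioo, Measure.restrict_restrict measurableSet_Ioo]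
  have hinter : Set.Ioo (0:ℝ) 1 ∩ Set.Ioi 0 = Set.Ioo (0:ℝ) 1 := by
    rw [Set.inter_eq_left]
    exact fun x hx => hx.1
  rw [hinter]
  have hcont : ContinuousOn (fun s : ℝ => 2 * A / (A + s)) (Set.Icc 0 1) := by
    apply ContinuousOn.div continuousOn_const (by fun_prop)
    intro x hx
    have : (0:ℝ) ≤ x := hx.1
    positivity
  have hint : IntegrableOn (fun s : ℝ => 2 * A / (A + s)) (Set.Ioo (0:ℝ) 1) :=
    (hcont.integrableOn_compact isCompact_Icc).mono_set Set.Ioo_subset_Icc_self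
  rw [← ofReal_integral_eq_lintegral_ofReal hint]
  · apply ENNReal.ofReal_le_ofReal
    have heq : ∫ s in Set.Ioo (0:ℝ) 1, 2 * A / (A + s) = 2 * A * Real.log ((A + 1) / A) := by
      rw [← MeasureTheory.integral_Ioc_eq_integral_Ioo,
        ← intervalIntegral.integral_of_le (by norm_num : (0:ℝ) ≤ 1)]
      have : ∀ s : ℝ, 2 * A / (A + s) = 2 * A * (A + s)⁻¹ := fun s => by ring
      simp_rw [this]
      rw [intervalIntegral.integral_const_mul]
      have hcomp : ∫ s in (0:ℝ)..1, (A + s)⁻¹ = ∫ s in A..(A+1), s⁻¹ := by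
        have := intervalIntegral.integral_comp_add_left (a := (0:ℝ)) (b := 1)
          (f := fun x : ℝ => x⁻¹) A
        rw [add_zero] at this
        exact this
      rw [hcomp, integral_inv_of_pos hA (by linarith)]
    rw [heq]
  · filter_upwards [ae_restrict_mem measurableSet_Ioo] with s hs
    have : (0:ℝ) < s := hs.1
    positivity

private lemma arith_bound (c₀ lam : ℝ) (hc₀ : 0 < c₀) (hlam : 2 ≤ lam) :
    2 * (4/(c₀*lam)) * Real.log ((4/(c₀*lam) + 1) / (4/(c₀*lam))) + 26 * (4/(c₀*lam))
      ≤ ((8/c₀) * (1 + Real.log (1+c₀) / Real.log 2) + 104 / (c₀ * Real.log 2))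
          * (lam⁻¹ * Real.log lam) := by
  have hlam0 : (0:ℝ) < lam := by linarith
  set A := 4/(c₀*lam) with hA
  have hA0 : 0 < A := by positivity
  have hlog2 : 0 < Real.log 2 := Real.log_pos (by norm_num)
  have hL2 : Real.log 2 ≤ Real.log lam := Real.log_le_log (by norm_num) hlam
  have hL0 : 0 < Real.log lam := lt_of_lt_of_le hlog2 hL2
  have hLc : 0 ≤ Real.log (1+c₀) := Real.log_nonneg (by linarith)
  have hratio : 1 ≤ Real.log lam / Real.log 2 := (one_le_div hlog2).mpr hL2
  have hstep1 : (A+1)/A ≤ (1+c₀)*lam := by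
    have h0 : (A+1)/A = 1 + c₀*lam/4 := by rw [hA]; field_simp
    rw [h0]; nlinarith
  have hstep2 : Real.log ((A+1)/A) ≤ Real.log (1+c₀) + Real.log lam := by
    calc Real.log ((A+1)/A) ≤ Real.log ((1+c₀)*lam) :=
          Real.log_le_log (by positivity) hstep1
      _ = _ := Real.log_mul (by positivity) hlam0.ne'
  have key1 : Real.log (1+c₀) ≤ Real.log (1+c₀) / Real.log 2 * Real.log lam := by
    calc Real.log (1+c₀) = Real.log (1+c₀) * 1 := (mul_one _).symm
      _ ≤ Real.log (1+c₀) * (Real.log lam / Real.log 2) :=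
          mul_le_mul_of_nonneg_left hratio hLc
      _ = _ := by ring
  have h3 : 2*A*Real.log ((A+1)/A) ≤ 2*A*(Real.log (1+c₀) + Real.log lam) :=
    mul_le_mul_of_nonneg_left hstep2 (by positivity)
  have e1 : 2*A*(Real.log (1+c₀) + Real.log lam)
      ≤ (8/c₀) * (1 + Real.log (1+c₀)/Real.log 2) * (lam⁻¹ * Real.log lam) := by
    have h5' : 2*A = (8/c₀) * lam⁻¹ := by rw [hA]; field_simp; ring
    rw [h5']
    have h4 : Real.log (1+c₀) + Real.log lam
        ≤ (1 + Real.log (1+c₀)/Real.log 2) * Real.log lam := by nlinarith [key1]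
    calc (8/c₀) * lam⁻¹ * (Real.log (1+c₀) + Real.log lam)
        ≤ (8/c₀) * lam⁻¹ * ((1 + Real.log (1+c₀)/Real.log 2) * Real.log lam) :=
          mul_le_mul_of_nonneg_left h4 (by positivity)
      _ = (8/c₀) * (1 + Real.log (1+c₀)/Real.log 2) * (lam⁻¹ * Real.log lam) := by ring
  have e2 : 26*A ≤ 104/(c₀*Real.log 2) * (lam⁻¹ * Real.log lam) := by
    have h6 : 26*A = 104/(c₀*lam) * 1 := by rw [hA]; ring
    have h7 : 104/(c₀*lam) * 1 ≤ 104/(c₀*lam) * (Real.log lam / Real.log 2) :=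
      mul_le_mul_of_nonneg_left hratio (by positivity)
    have h8 : 104/(c₀*lam) * (Real.log lam / Real.log 2)
        = 104/(c₀*Real.log 2) * (lam⁻¹ * Real.log lam) := by
      field_simp
    linarith [h6, h7, h8.le, h8.ge]
  linarith [h3, e1, e2]

/-- For a lower-Lipschitz curve `γ : [0,1] → ℝ²`,
`sup_y (∫₀¹ G_λ(|γ(r) − y|)² dr)^{1/2} ≤ C λ^{−1/2} (log λ)^{1/2}` for `λ ≥ 2`. -/
theorem stmt_7 (c₀ : ℝ) (hc₀ : 0 < c₀)
    (γ : ℝ → EuclideanSpace ℝ (Fin 2)) (hγm : Measurable γ)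
    (hγ : ∀ r ∈ Set.Icc (0 : ℝ) 1, ∀ r' ∈ Set.Icc (0 : ℝ) 1,
      c₀ * |r - r'| ≤ ‖γ r - γ r'‖) :
    ∃ C : ℝ, 0 ≤ C ∧
      ∀ lam : ℝ, 2 ≤ lam → ∀ y : EuclideanSpace ℝ (Fin 2),
        (∫⁻ r in Set.Icc (0 : ℝ) 1,
            ENNReal.ofReal (resolventMajorant lam ‖γ r - y‖ ^ 2)) ^ ((1 : ℝ) / 2)
          ≤ ENNReal.ofReal (C * lam ^ (-(1 / 2) : ℝ) * Real.log lam ^ ((1 : ℝ) / 2)) := by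
  have hlog2 : 0 < Real.log 2 := Real.log_pos (by norm_num)
  have hLc : 0 ≤ Real.log (1+c₀) := Real.log_nonneg (by linarith)
  set K : ℝ := (8/c₀) * (1 + Real.log (1+c₀)/Real.log 2) + 104/(c₀*Real.log 2) with hK
  have hK0 : 0 ≤ K := by positivity
  refine ⟨Real.sqrt K, Real.sqrt_nonneg _, ?_⟩
  intro lam hlam y
  have hlam0 : (0:ℝ) < lam := by linarith
  have hL0 : 0 < Real.log lam :=
    lt_of_lt_of_le hlog2 (Real.log_le_log (by norm_num) hlam)
  set A : ℝ := 4/(c₀*lam) with hA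
  have hA0 : 0 < A := by positivity
  have hfm : Measurable fun r => resolventMajorant lam ‖γ r - y‖ ^ 2 :=
    ((majorant_measurable lam).comp ((hγm.sub measurable_const).norm)).pow_const 2
  have hnn : 0 ≤ᵐ[volume.restrict (Set.Icc (0:ℝ) 1)]
      fun r => resolventMajorant lam ‖γ r - y‖ ^ 2 :=
    Filter.Eventually.of_forall fun r => sq_nonneg _
  have hlayer := lintegral_eq_lintegral_meas_lt (volume.restrict (Set.Icc (0:ℝ) 1))
    hnn hfm.aemeasurable
  rw [hlayer]
  have hg1m : Measurable fun t : ℝ => ENNReal.ofReal (2 * A * Real.exp (-Real.sqrt t)) :=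
    (ENNReal.continuous_ofReal.comp
      (continuous_const.mul (Real.continuous_exp.comp Real.continuous_sqrt.neg))).measurable
  have hbound : (∫⁻ t in Set.Ioi (0:ℝ),
      (volume.restrict (Set.Icc (0:ℝ) 1)) {r | t < resolventMajorant lam ‖γ r - y‖ ^ 2})
        ≤ ENNReal.ofReal (K * (lam⁻¹ * Real.log lam)) := by
    have hlogA : 0 ≤ Real.log ((A+1)/A) :=
      Real.log_nonneg ((le_div_iff₀ hA0).mpr (by linarith))
    calc (∫⁻ t in Set.Ioi (0:ℝ),
        (volume.restrict (Set.Icc (0:ℝ) 1)) {r | t < resolventMajorant lam ‖γ r - y‖ ^ 2})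
        ≤ ∫⁻ t in Set.Ioi (0:ℝ),
            (ENNReal.ofReal (2 * A * Real.exp (-Real.sqrt t))
              + (Set.Ioo (0:ℝ) 1).indicator
                  (fun s => ENNReal.ofReal (2 * A / (A + s))) t) := by
          refine lintegral_mono_ae ?_
          filter_upwards [ae_restrict_mem measurableSet_Ioi] with t ht
          rw [Measure.restrict_apply' measurableSet_Icc]
          exact superlevel_measure c₀ hc₀ γ hγ y lam hlam ht
      _ = (∫⁻ t in Set.Ioi (0:ℝ), ENNReal.ofReal (2 * A * Real.exp (-Real.sqrt t)))
            + ∫⁻ t in Set.Ioi (0:ℝ), (Set.Ioo (0:ℝ) 1).indicator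
                (fun s => ENNReal.ofReal (2 * A / (A + s))) t :=
          lintegral_add_left hg1m _
      _ ≤ ENNReal.ofReal (26 * A) + ENNReal.ofReal (2 * A * Real.log ((A + 1) / A)) :=
          add_le_add (exp_integral_bound A hA0.le) (log_integral_bound A hA0)
      _ = ENNReal.ofReal (2 * A * Real.log ((A+1)/A) + 26 * A) := by
          rw [← ENNReal.ofReal_add (by positivity) (by positivity)]
          congr 1; ring
      _ ≤ ENNReal.ofReal (K * (lam⁻¹ * Real.log lam)) := by
          apply ENNReal.ofReal_le_ofReal
          have := arith_bound c₀ lam hc₀ hlam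
          rw [hK, hA]
          exact this
  calc (∫⁻ t in Set.Ioi (0:ℝ),
      (volume.restrict (Set.Icc (0:ℝ) 1)) {r | t < resolventMajorant lam ‖γ r - y‖ ^ 2})
        ^ ((1:ℝ)/2)
      ≤ (ENNReal.ofReal (K * (lam⁻¹ * Real.log lam))) ^ ((1:ℝ)/2) :=
        ENNReal.rpow_le_rpow hbound (by norm_num)
    _ = ENNReal.ofReal ((K * (lam⁻¹ * Real.log lam)) ^ ((1:ℝ)/2)) :=
        ENNReal.ofReal_rpow_of_nonneg (by positivity) (by norm_num)
    _ = ENNReal.ofReal (Real.sqrt K * lam ^ (-(1 / 2) : ℝ) * Real.log lam ^ ((1:ℝ)/2)) := by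
        congr 1
        rw [Real.mul_rpow hK0 (by positivity), Real.mul_rpow (by positivity) hL0.le,
          ← Real.sqrt_eq_rpow, Real.inv_rpow hlam0.le, ← Real.rpow_neg hlam0.le]
        ring
end

section
/- Let λ ≥ 1, 0 < ε ≤ 1, let j be a positive integer with λ/4 ≤ εj ≤ 4λ, and let τ ∈ [εj, ε(j+1)]. Then |τ² − (λ + iε)²| ≥ (1/4) λ (ε + |εj − λ|), where i is the imaginary unit and | · | on the left-hand side denotes the complex modulus. Equivalently, |τ² − (λ + iε)²|^{−1} ≤ 4 λ^{−1} (ε + |εj − λ|)^{−1}. -/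
lemma stmt_12_aux (lam ε τ a : ℝ) (hlam : 1 ≤ lam) (hε : 0 < ε) (hε1 : ε ≤ 1)
    (ha1 : lam / 4 ≤ a) (hτ1 : a ≤ τ) (hτ2 : τ ≤ a + ε) :
    ((1 / 4) * lam * (ε + |a - lam|)) ^ 2
      ≤ (τ ^ 2 - lam ^ 2 + ε ^ 2) ^ 2 + (2 * lam * ε) ^ 2 := by
  have hlam0 : (0 : ℝ) < lam := by linarith
  rcases abs_cases (a - lam) with ⟨h1, h2⟩ | ⟨h1, h2⟩
  · -- a ≥ lam
    rw [h1]
    have hre1 : 2 * lam * (a - lam) ≤ τ ^ 2 - lam ^ 2 + ε ^ 2 := by nlinarith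
    have hb : 0 ≤ 2 * lam * (a - lam) := by positivity
    have hsq : (2 * lam * (a - lam)) ^ 2 ≤ (τ ^ 2 - lam ^ 2 + ε ^ 2) ^ 2 :=
      pow_le_pow_left₀ hb hre1 2
    nlinarith [sq_nonneg (lam * (a - lam - ε)), sq_nonneg (lam * (a - lam + ε)),
      mul_pos hlam0 hε]
  · -- a < lam
    rw [h1, neg_sub]
    rcases le_or_gt (lam - a) (2 * ε) with hcase | hcase
    · have hle : lam * (ε + (lam - a)) ≤ 3 * (lam * ε) := by nlinarith
      have hsq : (lam * (ε + (lam - a))) ^ 2 ≤ (3 * (lam * ε)) ^ 2 :=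
        pow_le_pow_left₀ (by nlinarith) hle 2
      nlinarith [sq_nonneg (τ ^ 2 - lam ^ 2 + ε ^ 2), sq_nonneg (lam * ε)]
    · -- lam - a > 2ε
      have hτlam : τ ≤ lam - ((lam - a) - ε) := by linarith
      have hde : 0 ≤ (lam - a) - ε := by linarith
      have h3 : lam * ((lam - a) - ε) ≤ lam ^ 2 - τ ^ 2 := by nlinarith
      have h4 : ε ^ 2 ≤ lam * ε := by nlinarith
      have hre2 : lam * ((lam - a) - 2 * ε) ≤ lam ^ 2 - τ ^ 2 - ε ^ 2 := by nlinarith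
      have hb : 0 ≤ lam * ((lam - a) - 2 * ε) := by nlinarith
      have hsq : (lam * ((lam - a) - 2 * ε)) ^ 2 ≤ (lam ^ 2 - τ ^ 2 - ε ^ 2) ^ 2 :=
        pow_le_pow_left₀ hb hre2 2
      have heq : (lam ^ 2 - τ ^ 2 - ε ^ 2) ^ 2 = (τ ^ 2 - lam ^ 2 + ε ^ 2) ^ 2 := by ring
      have hp : (ε + (lam - a)) ^ 2 ≤ 16 * (((lam - a) - 2 * ε) ^ 2 + 4 * ε ^ 2) := by
        nlinarith [sq_nonneg (5 * (lam - a) - 11 * ε), sq_nonneg ε]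
      have hpoly : (lam * (ε + (lam - a))) ^ 2
          ≤ 16 * ((lam * ((lam - a) - 2 * ε)) ^ 2 + 4 * (lam * ε) ^ 2) := by
        have h := mul_le_mul_of_nonneg_left hp (sq_nonneg lam)
        calc (lam * (ε + (lam - a))) ^ 2 = lam ^ 2 * (ε + (lam - a)) ^ 2 := by ring
          _ ≤ lam ^ 2 * (16 * (((lam - a) - 2 * ε) ^ 2 + 4 * ε ^ 2)) := h
          _ = 16 * ((lam * ((lam - a) - 2 * ε)) ^ 2 + 4 * (lam * ε) ^ 2) := by ring
      calc (1 / 4 * lam * (ε + (lam - a))) ^ 2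
          = (lam * (ε + (lam - a))) ^ 2 / 16 := by ring
        _ ≤ (16 * ((lam * ((lam - a) - 2 * ε)) ^ 2 + 4 * (lam * ε) ^ 2)) / 16 := by
            linarith
        _ = (lam * ((lam - a) - 2 * ε)) ^ 2 + (2 * lam * ε) ^ 2 := by ring
        _ ≤ (lam ^ 2 - τ ^ 2 - ε ^ 2) ^ 2 + (2 * lam * ε) ^ 2 := by linarith
        _ = (τ ^ 2 - lam ^ 2 + ε ^ 2) ^ 2 + (2 * lam * ε) ^ 2 := by rw [heq]

/-- For `λ ≥ 1`, `0 < ε ≤ 1`, a positive integer `j` with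
`λ/4 ≤ εj ≤ 4λ`, and `τ ∈ [εj, ε(j+1)]`, one has
`|τ² − (λ + iε)²| ≥ (1/4) λ (ε + |εj − λ|)`. -/
theorem stmt_12 (lam ε τ : ℝ) (j : ℕ) (hlam : 1 ≤ lam) (hε : 0 < ε) (hε1 : ε ≤ 1)
    (hj : 0 < j) (hj1 : lam / 4 ≤ ε * (j : ℝ)) (hj2 : ε * (j : ℝ) ≤ 4 * lam)
    (hτ : τ ∈ Set.Icc (ε * (j : ℝ)) (ε * ((j : ℝ) + 1))) :
    (1 / 4) * lam * (ε + |ε * (j : ℝ) - lam|)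
      ≤ ‖(τ : ℂ) ^ 2 - ((lam : ℂ) + Complex.I * (ε : ℂ)) ^ 2‖ := by
  obtain ⟨hτ1, hτ2⟩ := hτ
  have hτ2' : τ ≤ ε * (j : ℝ) + ε := by nlinarith
  set z : ℂ := (τ : ℂ) ^ 2 - ((lam : ℂ) + Complex.I * (ε : ℂ)) ^ 2 with hz
  have hre : z.re = τ ^ 2 - lam ^ 2 + ε ^ 2 := by
    simp [hz, pow_two, Complex.mul_re, Complex.mul_im]
    ring
  have him : z.im = -(2 * lam * ε) := by
    simp [hz, pow_two, Complex.mul_re, Complex.mul_im]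
    ring
  have hn2 : ‖z‖ ^ 2 = (τ ^ 2 - lam ^ 2 + ε ^ 2) ^ 2 + (2 * lam * ε) ^ 2 := by
    rw [Complex.sq_norm, Complex.normSq_apply, hre, him]
    ring
  have key : ((1 / 4) * lam * (ε + |ε * (j : ℝ) - lam|)) ^ 2 ≤ ‖z‖ ^ 2 := by
    rw [hn2]
    exact stmt_12_aux lam ε τ (ε * (j : ℝ)) hlam hε hε1 hj1 hτ1 hτ2'
  have htnn : 0 ≤ (1 / 4) * lam * (ε + |ε * (j : ℝ) - lam|) := by positivity
  nlinarith [norm_nonneg z, key, htnn]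
end
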